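/- arXiv:1603.00510 — 8 statements merged into one kernel-verified Lean document; each statement's English description precedes it below -/
import Mathlib

section
/- Let A be a commutative ring with unit, M an A-module, and f(z) ∈ End_A(M)[[z]] a formal power series of A-linear endomorphisms of M. Then there exists a unique Hasse–Schmidt derivation 𝒟^f(z): ⋀M → (⋀M)[[z]] (i.e. an A-algebra homomorphism from the exterior algebra ⋀M to the algebra of formal power series over ⋀M, with the wedge product extended coefficientwise) such that 𝒟^f(z)m = f(z)(m) for all m ∈ M. -/
/-!
STATEMENT 0: For a commutative ring `A`, an `A`-module `M` and a formal power series
`f(z) = Σ fᵢ zⁱ ∈ End_A(M)[[z]]` (encoded as `f : ℕ → Module.End A M`), there exists a unique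
Hasse–Schmidt derivation `𝒟^f(z) : ⋀M → (⋀M)[[z]]`, i.e. a unique `A`-algebra homomorphism
from the exterior algebra to power series over it, such that `𝒟^f(z) m = f(z)(m) = Σ ι(fᵢ m) zⁱ`
for every `m ∈ M`.
-/

noncomputable def hsPhi (A : Type*) [CommRing A] (M : Type*) [AddCommGroup M] [Module A M]
    (f : ℕ → Module.End A M) : M →ₗ[A] PowerSeries (ExteriorAlgebra A M) where
  toFun m := PowerSeries.mk fun i => ExteriorAlgebra.ι A (f i m)
  map_add' m n := by ext i; simp
  map_smul' a m := by ext i; simp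

lemma hsPhi_sq (A : Type*) [CommRing A] (M : Type*) [AddCommGroup M] [Module A M]
    (f : ℕ → Module.End A M) (m : M) : hsPhi A M f m * hsPhi A M f m = 0 := by
  ext n
  rw [PowerSeries.coeff_mul]
  simp only [hsPhi, LinearMap.coe_mk, AddHom.coe_mk, PowerSeries.coeff_mk, map_zero]
  apply Finset.sum_involution (fun p _ => (p.2, p.1))
  · intro p hp
    exact ExteriorAlgebra.ι_add_mul_swap (f p.1 m) (f p.2 m)
  · intro p hp h hne
    have hpp : p.1 = p.2 := by
      rcases p with ⟨a, b⟩
      by_contra hc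
      exact hc (congrArg Prod.snd hne)
    exact absurd (by rw [hpp]; exact ExteriorAlgebra.ι_sq_zero (f p.2 m)) h
  · intro p hp
    simpa [Finset.mem_antidiagonal, add_comm] using hp
  · intro p hp; rfl

theorem hasse_schmidt_derivation_exists_unique
    (A : Type*) [CommRing A] (M : Type*) [AddCommGroup M] [Module A M]
    (f : ℕ → Module.End A M) :
    ∃! D : ExteriorAlgebra A M →ₐ[A] PowerSeries (ExteriorAlgebra A M),
      ∀ (m : M) (i : ℕ),
        PowerSeries.coeff i (D (ExteriorAlgebra.ι A m)) =
          ExteriorAlgebra.ι A (f i m) := by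
  refine ⟨ExteriorAlgebra.lift A ⟨hsPhi A M f, hsPhi_sq A M f⟩, ?_, ?_⟩
  · intro m i
    rw [ExteriorAlgebra.lift_ι_apply]
    simp [hsPhi]
  · intro D hD
    apply ExteriorAlgebra.hom_ext
    ext m
    have : D (ExteriorAlgebra.ι A m) = hsPhi A M f m := by
      ext i
      simp [hsPhi, hD m i]
    simp [this, ExteriorAlgebra.lift_ι_apply, hsPhi]
end

section
/- Let A be a commutative ring and M an A-module. (1) If 𝒟(z) = Σ_{i≥0} D_i z^i and ℰ(z) = Σ_{i≥0} E_i z^i are Hasse–Schmidt derivations on ⋀M, then their Cauchy product 𝒟(z)ℰ(z) = Σ_{j≥0} (Σ_{i=0}^{j} D_i ∘ E_{j−i}) z^j is a Hasse–Schmidt derivation on ⋀M. (2) If 𝒟(z) is a Hasse–Schmidt derivation whose constant term D₀ is an automorphism of ⋀M, then 𝒟(z) is invertible in End_A(⋀M)[[z]] and its inverse power series 𝒟̄(z) is also a Hasse–Schmidt derivation. -/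
/-!
STATEMENT 1: Hasse–Schmidt derivations on the exterior algebra `⋀M`, viewed as formal power
series with coefficients in `End_A(⋀M)` (so that the product of two such series is the Cauchy
product `Σⱼ (Σᵢ Dᵢ ∘ E_{j-i}) zʲ`), form a multiplicatively closed set:
(1) the product of two HS derivations is an HS derivation;
(2) if the constant term `D₀` of an HS derivation `𝒟(z)` is an automorphism of `⋀M`
(i.e. a unit of `End_A(⋀M)`), then `𝒟(z)` is invertible in `End_A(⋀M)[[z]]` and its inverse
is again an HS derivation.
-/

/-- A formal power series `D(z) = Σ Dₙ zⁿ` of endomorphisms of the exterior algebra is a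
Hasse–Schmidt derivation if the induced map `⋀M → (⋀M)[[z]]` is an algebra homomorphism, i.e.
the coefficients satisfy the higher-order Leibniz rules and send `1` to `1`. -/
def IsHSDerivation {A : Type*} [CommRing A] {M : Type*} [AddCommGroup M] [Module A M]
    (D : PowerSeries (Module.End A (ExteriorAlgebra A M))) : Prop :=
  (∀ (n : ℕ) (x y : ExteriorAlgebra A M),
      PowerSeries.coeff n D (x * y) =
        ∑ p ∈ Finset.HasAntidiagonal.antidiagonal n,
          (PowerSeries.coeff p.1 D x) * (PowerSeries.coeff p.2 D y)) ∧
  (∀ n : ℕ, PowerSeries.coeff n D (1 : ExteriorAlgebra A M) =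
      if n = 0 then 1 else 0)

open Finset

section AuxSums

theorem hs_triple_sum {β : Type*} [AddCommMonoid β] (t : ℕ → ℕ → ℕ → β) (n : ℕ) :
    ∑ km ∈ antidiagonal n, ∑ ij ∈ antidiagonal km.1, t ij.1 ij.2 km.2
      = ∑ il ∈ antidiagonal n, ∑ jm ∈ antidiagonal il.2, t il.1 jm.1 jm.2 := by
  rw [Finset.sum_sigma', Finset.sum_sigma']
  apply Finset.sum_nbij' (i := fun x => ⟨(x.2.1, x.2.2 + x.1.2), (x.2.2, x.1.2)⟩)
    (j := fun x => ⟨(x.1.1 + x.2.1, x.2.2), (x.1.1, x.2.1)⟩)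
  · rintro ⟨⟨k,m⟩,⟨i,j⟩⟩ h
    simp only [Finset.mem_sigma, Finset.HasAntidiagonal.mem_antidiagonal] at h ⊢
    obtain ⟨h1, h2⟩ := h
    exact ⟨by omega, trivial⟩
  · rintro ⟨⟨i,l⟩,⟨j,m⟩⟩ h
    simp only [Finset.mem_sigma, Finset.HasAntidiagonal.mem_antidiagonal] at h ⊢
    obtain ⟨h1, h2⟩ := h
    exact ⟨by omega, trivial⟩
  · rintro ⟨⟨k,m⟩,⟨i,j⟩⟩ h
    simp only [Finset.mem_sigma, Finset.HasAntidiagonal.mem_antidiagonal] at h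
    obtain ⟨h1, h2⟩ := h
    subst h2; rfl
  · rintro ⟨⟨i,l⟩,⟨j,m⟩⟩ h
    simp only [Finset.mem_sigma, Finset.HasAntidiagonal.mem_antidiagonal] at h
    obtain ⟨h1, h2⟩ := h
    subst h2; rfl
  · rintro ⟨⟨k,m⟩,⟨i,j⟩⟩ h
    rfl

theorem hs_quad_sum {β : Type*} [AddCommMonoid β] (t : ℕ → ℕ → ℕ → ℕ → β) (n : ℕ) :
    ∑ ij ∈ antidiagonal n, ∑ cd ∈ antidiagonal ij.1, ∑ ab ∈ antidiagonal ij.2,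
        t cd.1 ab.1 cd.2 ab.2
      = ∑ pq ∈ antidiagonal n, ∑ ca ∈ antidiagonal pq.1, ∑ db ∈ antidiagonal pq.2,
        t ca.1 ca.2 db.1 db.2 := by
  rw [Finset.sum_sigma', Finset.sum_sigma', Finset.sum_sigma', Finset.sum_sigma']
  apply Finset.sum_nbij'
    (i := fun x => ⟨⟨(x.1.2.1 + x.2.1, x.1.2.2 + x.2.2), (x.1.2.1, x.2.1)⟩, (x.1.2.2, x.2.2)⟩)
    (j := fun x => ⟨⟨(x.1.2.1 + x.2.1, x.1.2.2 + x.2.2), (x.1.2.1, x.2.1)⟩, (x.1.2.2, x.2.2)⟩)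
  · rintro ⟨⟨⟨i,j⟩,⟨c,d⟩⟩,⟨a,b⟩⟩ h
    simp only [Finset.mem_sigma, Finset.HasAntidiagonal.mem_antidiagonal] at h ⊢
    obtain ⟨⟨h1, h2⟩, h3⟩ := h
    exact ⟨⟨by omega, trivial⟩, trivial⟩
  · rintro ⟨⟨⟨p,q⟩,⟨c,a⟩⟩,⟨d,b⟩⟩ h
    simp only [Finset.mem_sigma, Finset.HasAntidiagonal.mem_antidiagonal] at h ⊢
    obtain ⟨⟨h1, h2⟩, h3⟩ := h
    exact ⟨⟨by omega, trivial⟩, trivial⟩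
  · rintro ⟨⟨⟨i,j⟩,⟨c,d⟩⟩,⟨a,b⟩⟩ h
    simp only [Finset.mem_sigma, Finset.HasAntidiagonal.mem_antidiagonal] at h
    obtain ⟨⟨h1, h2⟩, h3⟩ := h
    subst h2; subst h3; rfl
  · rintro ⟨⟨⟨p,q⟩,⟨c,a⟩⟩,⟨d,b⟩⟩ h
    simp only [Finset.mem_sigma, Finset.HasAntidiagonal.mem_antidiagonal] at h
    obtain ⟨⟨h1, h2⟩, h3⟩ := h
    subst h2; subst h3; rfl
  · rintro ⟨⟨⟨i,j⟩,⟨c,d⟩⟩,⟨a,b⟩⟩ h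
    rfl

end AuxSums

section HSAux

variable {A : Type*} [CommRing A] {R : Type*} [Ring R] [Algebra A R]

/-- Coefficient of a product of endomorphism-valued power series, applied to an element. -/
theorem hs_coeff_mul_apply (D E : PowerSeries (Module.End A R)) (n : ℕ) (x : R) :
    PowerSeries.coeff n (D * E) x
      = ∑ p ∈ antidiagonal n,
          PowerSeries.coeff p.1 D (PowerSeries.coeff p.2 E x) := by
  rw [PowerSeries.coeff_mul]
  simp [LinearMap.sum_apply, Module.End.mul_apply]

/-- The Cauchy-product action of `End(R)⟦X⟧` on `R⟦X⟧`. -/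
noncomputable def hsAct (F : PowerSeries (Module.End A R)) (f : PowerSeries R) :
    PowerSeries R :=
  PowerSeries.mk fun n => ∑ p ∈ antidiagonal n,
    PowerSeries.coeff p.1 F (PowerSeries.coeff p.2 f)

theorem hsAct_coeff (F : PowerSeries (Module.End A R)) (f : PowerSeries R) (n : ℕ) :
    PowerSeries.coeff n (hsAct F f)
      = ∑ p ∈ antidiagonal n, PowerSeries.coeff p.1 F (PowerSeries.coeff p.2 f) := by
  simp [hsAct]

theorem hsAct_one (f : PowerSeries R) : hsAct (1 : PowerSeries (Module.End A R)) f = f := by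
  ext n
  rw [hsAct_coeff]
  rw [Finset.sum_eq_single (0, n)]
  · simp
  · rintro ⟨i, j⟩ hmem hne
    rw [Finset.HasAntidiagonal.mem_antidiagonal] at hmem
    have hi : i ≠ 0 := by
      rintro rfl
      exact hne (by simp [← hmem])
    simp [PowerSeries.coeff_one, hi]
  · intro h
    exact absurd (Finset.HasAntidiagonal.mem_antidiagonal.2 (by simp)) h

theorem hsAct_mul (F G : PowerSeries (Module.End A R)) (f : PowerSeries R) :
    hsAct (F * G) f = hsAct F (hsAct G f) := by
  ext n
  rw [hsAct_coeff, hsAct_coeff]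
  calc ∑ p ∈ antidiagonal n,
        PowerSeries.coeff p.1 (F * G) (PowerSeries.coeff p.2 f)
      = ∑ km ∈ antidiagonal n, ∑ ij ∈ antidiagonal km.1,
          PowerSeries.coeff ij.1 F
            (PowerSeries.coeff ij.2 G (PowerSeries.coeff km.2 f)) := by
        refine Finset.sum_congr rfl fun p _ => ?_
        rw [hs_coeff_mul_apply]
    _ = ∑ il ∈ antidiagonal n, ∑ jm ∈ antidiagonal il.2,
          PowerSeries.coeff il.1 F
            (PowerSeries.coeff jm.1 G (PowerSeries.coeff jm.2 f)) :=
        hs_triple_sum (fun i j m => PowerSeries.coeff i F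
          (PowerSeries.coeff j G (PowerSeries.coeff m f))) n
    _ = ∑ p ∈ antidiagonal n,
          PowerSeries.coeff p.1 F (PowerSeries.coeff p.2 (hsAct G f)) := by
        refine Finset.sum_congr rfl fun p _ => ?_
        rw [hsAct_coeff, map_sum]

theorem hsAct_cancel {D Dbar : PowerSeries (Module.End A R)}
    (h : Dbar * D = 1) {f g : PowerSeries R} (hfg : hsAct D f = hsAct D g) : f = g := by
  have := congrArg (hsAct Dbar) hfg
  rwa [← hsAct_mul, ← hsAct_mul, h, hsAct_one, hsAct_one] at this

/-- The key Leibniz computation. -/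
theorem hs_leibniz_aux {D : PowerSeries (Module.End A R)}
    (hD : ∀ (n : ℕ) (x y : R),
      PowerSeries.coeff n D (x * y) =
        ∑ p ∈ antidiagonal n,
          (PowerSeries.coeff p.1 D x) * (PowerSeries.coeff p.2 D y))
    (E : PowerSeries (Module.End A R)) (n : ℕ) (x y : R) :
    ∑ ij ∈ antidiagonal n, PowerSeries.coeff ij.1 D
        (∑ ab ∈ antidiagonal ij.2,
          PowerSeries.coeff ab.1 E x * PowerSeries.coeff ab.2 E y)
      = ∑ pq ∈ antidiagonal n,
          PowerSeries.coeff pq.1 (D * E) x * PowerSeries.coeff pq.2 (D * E) y := by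
  calc ∑ ij ∈ antidiagonal n, PowerSeries.coeff ij.1 D
        (∑ ab ∈ antidiagonal ij.2,
          PowerSeries.coeff ab.1 E x * PowerSeries.coeff ab.2 E y)
      = ∑ ij ∈ antidiagonal n, ∑ ab ∈ antidiagonal ij.2, ∑ cd ∈ antidiagonal ij.1,
          PowerSeries.coeff cd.1 D (PowerSeries.coeff ab.1 E x)
            * PowerSeries.coeff cd.2 D (PowerSeries.coeff ab.2 E y) := by
        refine Finset.sum_congr rfl fun ij _ => ?_
        rw [map_sum]
        exact Finset.sum_congr rfl fun ab _ => hD ij.1 _ _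
    _ = ∑ ij ∈ antidiagonal n, ∑ cd ∈ antidiagonal ij.1, ∑ ab ∈ antidiagonal ij.2,
          PowerSeries.coeff cd.1 D (PowerSeries.coeff ab.1 E x)
            * PowerSeries.coeff cd.2 D (PowerSeries.coeff ab.2 E y) := by
        exact Finset.sum_congr rfl fun ij _ => Finset.sum_comm
    _ = ∑ pq ∈ antidiagonal n, ∑ ca ∈ antidiagonal pq.1, ∑ db ∈ antidiagonal pq.2,
          PowerSeries.coeff ca.1 D (PowerSeries.coeff ca.2 E x)
            * PowerSeries.coeff db.1 D (PowerSeries.coeff db.2 E y) :=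
        hs_quad_sum (fun c a d b => PowerSeries.coeff c D (PowerSeries.coeff a E x)
          * PowerSeries.coeff d D (PowerSeries.coeff b E y)) n
    _ = ∑ pq ∈ antidiagonal n,
          PowerSeries.coeff pq.1 (D * E) x * PowerSeries.coeff pq.2 (D * E) y := by
        refine Finset.sum_congr rfl fun pq _ => ?_
        rw [hs_coeff_mul_apply, hs_coeff_mul_apply, Finset.sum_mul_sum]

/-- Sum of `D` applied to a delta-like family. -/
theorem hs_delta_sum {D : PowerSeries (Module.End A R)}
    (hD : ∀ n : ℕ, PowerSeries.coeff n D (1 : R) = if n = 0 then 1 else 0) (n : ℕ) :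
    ∑ p ∈ antidiagonal n,
        PowerSeries.coeff p.1 D (if p.2 = 0 then (1 : R) else 0)
      = if n = 0 then 1 else 0 := by
  rw [Finset.sum_eq_single (n, 0)]
  · simp [hD n]
  · rintro ⟨i, j⟩ hmem hne
    rw [Finset.HasAntidiagonal.mem_antidiagonal] at hmem
    have hj : j ≠ 0 := by
      rintro rfl
      exact hne (by simp [← hmem])
    simp [hj]
  · intro h
    exact absurd (Finset.HasAntidiagonal.mem_antidiagonal.2 (by simp)) h

end HSAux

section HSAux2
open Finset
variable {A : Type*} [CommRing A] {R : Type*} [Ring R] [Algebra A R]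

theorem hs_delta_pair_sum (x y : R) (n : ℕ) :
    ∑ pq ∈ antidiagonal n,
        (if pq.1 = 0 then x else 0) * (if pq.2 = 0 then y else 0)
      = if n = 0 then x * y else 0 := by
  by_cases hn : n = 0
  · subst hn
    simp
  · rw [if_neg hn]
    apply Finset.sum_eq_zero
    rintro ⟨i, j⟩ hmem
    rw [Finset.HasAntidiagonal.mem_antidiagonal] at hmem
    have : i ≠ 0 ∨ j ≠ 0 := by omega
    rcases this with h | h <;> simp [h]

end HSAux2

theorem hs_derivations_closed_under_product_and_inverse
    (A : Type*) [CommRing A] (M : Type*) [AddCommGroup M] [Module A M] :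
    (∀ D E : PowerSeries (Module.End A (ExteriorAlgebra A M)),
        IsHSDerivation D → IsHSDerivation E → IsHSDerivation (D * E)) ∧
    (∀ D : PowerSeries (Module.End A (ExteriorAlgebra A M)),
        IsHSDerivation D → IsUnit (PowerSeries.constantCoeff D) →
        ∃ Dbar : PowerSeries (Module.End A (ExteriorAlgebra A M)),
          D * Dbar = 1 ∧ Dbar * D = 1 ∧ IsHSDerivation Dbar) := by
  classical
  constructor
  · -- products of HS derivations
    intro D E hD hE
    constructor
    · intro n x y
      rw [hs_coeff_mul_apply]
      calc ∑ p ∈ Finset.HasAntidiagonal.antidiagonal n,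
            PowerSeries.coeff p.1 D (PowerSeries.coeff p.2 E (x * y))
          = ∑ ij ∈ Finset.HasAntidiagonal.antidiagonal n, PowerSeries.coeff ij.1 D
              (∑ ab ∈ Finset.HasAntidiagonal.antidiagonal ij.2,
                PowerSeries.coeff ab.1 E x * PowerSeries.coeff ab.2 E y) := by
            exact Finset.sum_congr rfl fun p _ => by rw [hE.1]
        _ = _ := hs_leibniz_aux hD.1 E n x y
    · intro n
      rw [hs_coeff_mul_apply]
      calc ∑ p ∈ Finset.HasAntidiagonal.antidiagonal n,
            PowerSeries.coeff p.1 D (PowerSeries.coeff p.2 E 1)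
          = ∑ p ∈ Finset.HasAntidiagonal.antidiagonal n,
              PowerSeries.coeff p.1 D (if p.2 = 0 then 1 else 0) := by
            exact Finset.sum_congr rfl fun p _ => by rw [hE.2]
        _ = _ := hs_delta_sum hD.2 n
  · -- inverses of HS derivations
    intro D hD hu
    have hcu : PowerSeries.constantCoeff D = hu.unit := hu.unit_spec.symm
    set Dbar := PowerSeries.invOfUnit D hu.unit with hDbar
    have hmul : D * Dbar = 1 := PowerSeries.mul_invOfUnit D hu.unit hcu
    have hmul' : Dbar * D = 1 := PowerSeries.invOfUnit_mul D hu.unit hcu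
    refine ⟨Dbar, hmul, hmul', ?_, ?_⟩
    · -- Leibniz rule for the inverse
      intro n x y
      have key : (PowerSeries.mk fun m => PowerSeries.coeff m Dbar (x * y))
          = PowerSeries.mk fun m => ∑ p ∈ Finset.HasAntidiagonal.antidiagonal m,
              PowerSeries.coeff p.1 Dbar x * PowerSeries.coeff p.2 Dbar y := by
        apply hsAct_cancel hmul'
        ext m
        rw [hsAct_coeff, hsAct_coeff]
        have lhs_eq : ∑ p ∈ Finset.HasAntidiagonal.antidiagonal m, PowerSeries.coeff p.1 D
              (PowerSeries.coeff p.2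
                (PowerSeries.mk fun k => PowerSeries.coeff k Dbar (x * y)))
            = if m = 0 then x * y else 0 := by
          simp only [PowerSeries.coeff_mk]
          rw [← hs_coeff_mul_apply, hmul, PowerSeries.coeff_one]
          split_ifs <;> simp
        rw [lhs_eq]
        symm
        calc ∑ p ∈ Finset.HasAntidiagonal.antidiagonal m, PowerSeries.coeff p.1 D
              (PowerSeries.coeff p.2 (PowerSeries.mk fun k =>
                ∑ q ∈ Finset.HasAntidiagonal.antidiagonal k,
                  PowerSeries.coeff q.1 Dbar x * PowerSeries.coeff q.2 Dbar y))
            = ∑ ij ∈ Finset.HasAntidiagonal.antidiagonal m, PowerSeries.coeff ij.1 D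
                (∑ ab ∈ Finset.HasAntidiagonal.antidiagonal ij.2,
                  PowerSeries.coeff ab.1 Dbar x * PowerSeries.coeff ab.2 Dbar y) := by
              simp only [PowerSeries.coeff_mk]
          _ = ∑ pq ∈ Finset.HasAntidiagonal.antidiagonal m,
                PowerSeries.coeff pq.1 (D * Dbar) x
                  * PowerSeries.coeff pq.2 (D * Dbar) y := hs_leibniz_aux hD.1 Dbar m x y
          _ = ∑ pq ∈ Finset.HasAntidiagonal.antidiagonal m,
                (if pq.1 = 0 then x else 0) * (if pq.2 = 0 then y else 0) := by
              refine Finset.sum_congr rfl fun pq _ => ?_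
              rw [hmul, PowerSeries.coeff_one, PowerSeries.coeff_one]
              congr 1 <;> (split_ifs <;> simp)
          _ = if m = 0 then x * y else 0 := hs_delta_pair_sum x y m
      have := congrArg (PowerSeries.coeff n) key
      simpa only [PowerSeries.coeff_mk] using this
    · -- unit condition for the inverse
      intro n
      have key : (PowerSeries.mk fun m =>
            PowerSeries.coeff m Dbar (1 : ExteriorAlgebra A M))
          = PowerSeries.mk fun m => if m = 0 then 1 else 0 := by
        apply hsAct_cancel hmul'
        ext m
        rw [hsAct_coeff, hsAct_coeff]
        have lhs_eq : ∑ p ∈ Finset.HasAntidiagonal.antidiagonal m, PowerSeries.coeff p.1 D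
              (PowerSeries.coeff p.2
                (PowerSeries.mk fun k =>
                  PowerSeries.coeff k Dbar (1 : ExteriorAlgebra A M)))
            = if m = 0 then 1 else 0 := by
          simp only [PowerSeries.coeff_mk]
          rw [← hs_coeff_mul_apply, hmul, PowerSeries.coeff_one]
          split_ifs <;> simp
        rw [lhs_eq]
        symm
        calc ∑ p ∈ Finset.HasAntidiagonal.antidiagonal m, PowerSeries.coeff p.1 D
              (PowerSeries.coeff p.2 (PowerSeries.mk fun k =>
                if k = 0 then (1 : ExteriorAlgebra A M) else 0))
            = ∑ p ∈ Finset.HasAntidiagonal.antidiagonal m, PowerSeries.coeff p.1 D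
                (if p.2 = 0 then (1 : ExteriorAlgebra A M) else 0) := by
              simp only [PowerSeries.coeff_mk]
          _ = if m = 0 then 1 else 0 := hs_delta_sum hD.2 m
      have := congrArg (PowerSeries.coeff n) key
      simpa only [PowerSeries.coeff_mk] using this
end

section
/- Integration by parts: let A be a commutative ring, M an A-module, and 𝒟(z) a Hasse–Schmidt derivation on ⋀M whose constant term D₀ is an automorphism of ⋀M, with inverse power series 𝒟̄(z). Then for all m₁, m₂ ∈ ⋀M one has (𝒟(z)m₁) ∧ m₂ = 𝒟(z)(m₁ ∧ 𝒟̄(z)m₂) in (⋀M)[[z]]. -/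
/-- Associativity-style reindexing of nested antidiagonal sums. -/
lemma antidiag_assoc {β : Type*} [AddCommMonoid β] (n : ℕ) (f : ℕ → ℕ → ℕ → β) :
    ∑ p ∈ Finset.HasAntidiagonal.antidiagonal n, ∑ q ∈ Finset.HasAntidiagonal.antidiagonal p.2, f p.1 q.1 q.2 =
    ∑ p ∈ Finset.HasAntidiagonal.antidiagonal n, ∑ q ∈ Finset.HasAntidiagonal.antidiagonal p.1, f q.1 q.2 p.2 := by
  rw [Finset.sum_sigma', Finset.sum_sigma']
  refine Finset.sum_nbij' (i := fun x => ⟨(x.1.1 + x.2.1, x.2.2), (x.1.1, x.2.1)⟩)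
    (j := fun x => ⟨(x.2.1, x.2.2 + x.1.2), (x.2.2, x.1.2)⟩) ?_ ?_ ?_ ?_ ?_
  · rintro ⟨⟨a, b⟩, ⟨c, d⟩⟩ h
    simp only [Finset.mem_sigma, Finset.HasAntidiagonal.mem_antidiagonal] at h ⊢
    exact ⟨by omega, trivial⟩
  · rintro ⟨⟨a, b⟩, ⟨c, d⟩⟩ h
    simp only [Finset.mem_sigma, Finset.HasAntidiagonal.mem_antidiagonal] at h ⊢
    exact ⟨by omega, trivial⟩
  · rintro ⟨⟨a, b⟩, ⟨c, d⟩⟩ h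
    simp only [Finset.mem_sigma, Finset.HasAntidiagonal.mem_antidiagonal] at h
    obtain ⟨h1, rfl⟩ := h
    rfl
  · rintro ⟨⟨a, b⟩, ⟨c, d⟩⟩ h
    simp only [Finset.mem_sigma, Finset.HasAntidiagonal.mem_antidiagonal] at h
    obtain ⟨h1, rfl⟩ := h
    rfl
  · rintro ⟨⟨a, b⟩, ⟨c, d⟩⟩ h
    rfl

theorem integration_by_parts
    (A : Type*) [CommRing A] (M : Type*) [AddCommGroup M] [Module A M]
    (D Dbar : PowerSeries (Module.End A (ExteriorAlgebra A M)))
    (hD : IsHSDerivation D)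
    (hD0 : IsUnit (PowerSeries.constantCoeff D))
    (hinv₁ : D * Dbar = 1) (hinv₂ : Dbar * D = 1)
    (m₁ m₂ : ExteriorAlgebra A M) :
    ∀ n : ℕ,
      (PowerSeries.coeff n D m₁) * m₂ =
        ∑ p ∈ Finset.HasAntidiagonal.antidiagonal n,
          PowerSeries.coeff p.1 D (m₁ * (PowerSeries.coeff p.2 Dbar m₂)) := by
  intro n
  symm
  have key : ∀ k : ℕ,
      ∑ q ∈ Finset.HasAntidiagonal.antidiagonal k,
        (PowerSeries.coeff q.1 D) ((PowerSeries.coeff q.2 Dbar) m₂) =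
        if k = 0 then m₂ else 0 := by
    intro k
    have h1 : PowerSeries.coeff k (D * Dbar) = PowerSeries.coeff k 1 := by rw [hinv₁]
    rw [PowerSeries.coeff_mul, PowerSeries.coeff_one] at h1
    have h2 := congrArg (fun e => e m₂) h1
    rw [LinearMap.sum_apply] at h2
    simp only [Module.End.mul_apply] at h2
    by_cases hk : k = 0 <;> simp only [hk, if_true, if_false, reduceIte] at h2 ⊢ <;>
      simpa using h2
  calc ∑ p ∈ Finset.HasAntidiagonal.antidiagonal n,
          PowerSeries.coeff p.1 D (m₁ * (PowerSeries.coeff p.2 Dbar m₂))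
      = ∑ p ∈ Finset.HasAntidiagonal.antidiagonal n, ∑ q ∈ Finset.HasAntidiagonal.antidiagonal p.1,
          (PowerSeries.coeff q.1 D m₁) *
            (PowerSeries.coeff q.2 D ((PowerSeries.coeff p.2 Dbar) m₂)) := by
        refine Finset.sum_congr rfl fun p _ => ?_
        exact hD.1 p.1 m₁ _
    _ = ∑ p ∈ Finset.HasAntidiagonal.antidiagonal n, ∑ q ∈ Finset.HasAntidiagonal.antidiagonal p.2,
          (PowerSeries.coeff p.1 D m₁) *
            (PowerSeries.coeff q.1 D ((PowerSeries.coeff q.2 Dbar) m₂)) :=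
        (antidiag_assoc n fun a b c =>
          (PowerSeries.coeff a D m₁) *
            (PowerSeries.coeff b D ((PowerSeries.coeff c Dbar) m₂))).symm
    _ = ∑ p ∈ Finset.HasAntidiagonal.antidiagonal n,
          (PowerSeries.coeff p.1 D m₁) * (if p.2 = 0 then m₂ else 0) := by
        refine Finset.sum_congr rfl fun p _ => ?_
        rw [← Finset.mul_sum, key p.2]
    _ = (PowerSeries.coeff n D m₁) * m₂ := by
        rw [Finset.sum_eq_single (n, 0)]
        · simp
        · rintro ⟨a, b⟩ hab hne
          simp only [Finset.HasAntidiagonal.mem_antidiagonal] at hab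
          have : b ≠ 0 := by rintro rfl; exact hne (by simp [← hab])
          simp [this]
        · intro h
          exact absurd (Finset.HasAntidiagonal.mem_antidiagonal.mpr (by simp)) h
end

section
/- For all r ≥ 1 and all partitions λ ∈ 𝒫_r one has σ̄_r [b]^r_λ = [b]^r_{λ+(1^r)} and σ̄_{−r} [b]^r_λ = [b]^r_{λ−(1^r)}, where (1^r) is the partition with r parts equal to 1, λ±(1^r) = (λ_1±1,…,λ_r±1), and [b]^r_{λ−(1^r)} is interpreted with the convention b_k = 0 for k < 0 (so σ̄_{−r}[b]^r_λ = 0 if λ_r = 0). -/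
open ExteriorAlgebra

/-- The free `ℤ`-module `M₀` with basis indexed by `ℕ`. -/
abbrev M₀ : Type := ℕ →₀ ℤ

/-- The exterior algebra `⋀M₀`. -/
abbrev ExtM₀ : Type := ExteriorAlgebra ℤ M₀

/-- The basis vectors `b i` of `M₀`, seen inside the exterior algebra. -/
noncomputable def b (i : ℕ) : ExtM₀ := ExteriorAlgebra.ι ℤ (Finsupp.single i 1)

/-- A family `D : ℕ → End(⋀M)` is a Hasse–Schmidt family if the series
`𝒟(z) = Σ Dₙ zⁿ` is an algebra homomorphism `⋀M → ⋀M[[z]]`. -/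
def IsHSFamily {R : Type*} [CommRing R] {M : Type*} [AddCommGroup M] [Module R M]
    (D : ℕ → Module.End R (ExteriorAlgebra R M)) : Prop :=
  (∀ (n : ℕ) (x y : ExteriorAlgebra R M),
      D n (x * y) = ∑ p ∈ Finset.HasAntidiagonal.antidiagonal n, (D p.1 x) * (D p.2 y)) ∧
  (∀ n : ℕ, D n (1 : ExteriorAlgebra R M) = if n = 0 then 1 else 0)

/-- `σ₊(z) = Σ σᵢ zⁱ`: the HS derivation with `σᵢ bⱼ = b_{i+j}`. -/
def IsSigmaPlus (D : ℕ → Module.End ℤ ExtM₀) : Prop :=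
  IsHSFamily D ∧ ∀ i j : ℕ, D i (b j) = b (i + j)

/-- `σ̄₊(z) = Σ (-1)ⁱ σ̄ᵢ zⁱ`: the (coefficientwise) HS derivation with
`σ̄₊(z) bⱼ = bⱼ - b_{j+1} z`.  Here `D i` is the coefficient of `zⁱ`, i.e. `D i = (-1)ⁱ σ̄ᵢ`. -/
def IsSigmaBarPlus (D : ℕ → Module.End ℤ ExtM₀) : Prop :=
  IsHSFamily D ∧ (∀ j, D 0 (b j) = b j) ∧ (∀ j, D 1 (b j) = -b (j + 1)) ∧
    (∀ i j, 2 ≤ i → D i (b j) = 0)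

/-- `σ₋(z) = Σ σ₋ᵢ z⁻ⁱ`: the HS derivation with `σ₋ᵢ bⱼ = b_{j-i}` (`0` if `i > j`).
Here `D i` is the coefficient of `z⁻ⁱ`. -/
def IsSigmaMinus (D : ℕ → Module.End ℤ ExtM₀) : Prop :=
  IsHSFamily D ∧ ∀ i j : ℕ, D i (b j) = if i ≤ j then b (j - i) else 0

/-- `σ̄₋(z) = Σ (-1)ⁱ σ̄₋ᵢ z⁻ⁱ`: the HS derivation with `σ̄₋(z) bⱼ = bⱼ - b_{j-1} z⁻¹`
(with `b_{-1} = 0`).  Here `D i` is the coefficient of `z⁻ⁱ`. -/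
def IsSigmaBarMinus (D : ℕ → Module.End ℤ ExtM₀) : Prop :=
  IsHSFamily D ∧ (∀ j, D 0 (b j) = b j) ∧
    (∀ j, D 1 (b j) = -(if 1 ≤ j then b (j - 1) else 0)) ∧
    (∀ i j, 2 ≤ i → D i (b j) = 0)

/-- The basis element `[b]^r_λ = b_{λ_r} ∧ b_{1+λ_{r-1}} ∧ ⋯ ∧ b_{r-1+λ_1}` of `⋀^r M₀`,
for a partition `λ` encoded as an antitone function `lam : Fin r → ℕ` (`lam 0 = λ₁`). -/
noncomputable def bwedge (r : ℕ) (lam : Fin r → ℕ) : ExtM₀ :=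
  (List.ofFn fun i : Fin r => b (i.1 + lam i.rev)).prod

/-- The Grassmann cone `𝒢_r ⊆ ⋀^r M₀` of decomposable tensors. -/
def GrassmannCone (r : ℕ) : Set ExtM₀ :=
  {x | ∃ v : Fin r → M₀, x = (List.ofFn fun i : Fin r => ExteriorAlgebra.ι ℤ (v i)).prod}

/-- The dual basis functional `β_j ∈ M₀*`, `β_j (b_i) = δ_{ij}`. -/
noncomputable def beta (j : ℕ) : Module.Dual ℤ M₀ := Finsupp.lapply j

/-- Contraction `β ⌟ x` of `x ∈ ⋀M₀` against a functional `β ∈ M₀^∨`: the unique odd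
derivation of degree `-1` of `⋀M₀` extending `β`. -/
noncomputable def contract (β : Module.Dual ℤ M₀) (x : ExtM₀) : ExtM₀ :=
  CliffordAlgebra.contractLeft β x

section Aux
variable {D : ℕ → Module.End ℤ ExtM₀}

lemma hs_prod_zero (hD : IsHSFamily D)
    (l : List ExtM₀) (h : ∀ x ∈ l, ∀ i, 2 ≤ i → D i x = 0) :
    ∀ n, l.length < n → D n l.prod = 0 := by
  induction l with
  | nil =>
    intro n hn
    rw [List.prod_nil, hD.2 n, if_neg (by simp at hn; omega)]
  | cons x t ih =>
    intro n hn
    rw [List.prod_cons, hD.1]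
    apply Finset.sum_eq_zero
    rintro ⟨p, q⟩ hpq
    rw [Finset.HasAntidiagonal.mem_antidiagonal] at hpq
    by_cases hp2 : 2 ≤ p
    · rw [h x List.mem_cons_self p hp2, zero_mul]
    · have ht : t.length < q := by simp at hn; omega
      rw [ih (fun y hy => h y (List.mem_cons_of_mem _ hy)) q ht, mul_zero]

lemma hs_prod_top (hD : IsHSFamily D) (l : List ExtM₀)
    (h0 : ∀ x ∈ l, D 0 x = x) (h2 : ∀ x ∈ l, ∀ i, 2 ≤ i → D i x = 0) :
    D l.length l.prod = (l.map fun x => D 1 x).prod := by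
  induction l with
  | nil => simpa using hD.2 0
  | cons x t ih =>
    rw [List.prod_cons, hD.1, List.length_cons]
    rw [Finset.sum_eq_single_of_mem (1, t.length) (by rw [Finset.HasAntidiagonal.mem_antidiagonal]; omega)]
    · rw [ih (fun y hy => h0 y (List.mem_cons_of_mem _ hy))
        (fun y hy => h2 y (List.mem_cons_of_mem _ hy)), List.map_cons, List.prod_cons]
    · rintro ⟨p, q⟩ hpq hne
      rw [Finset.HasAntidiagonal.mem_antidiagonal] at hpq
      by_cases hp2 : 2 ≤ p
      · rw [h2 x List.mem_cons_self p hp2, zero_mul]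
      · rcases (by omega : p = 0 ∨ p = 1) with rfl | rfl
        swap
        · exact absurd (by simp; omega) hne
        rw [hs_prod_zero hD t (fun y hy => h2 y (List.mem_cons_of_mem _ hy)) q (by omega),
          mul_zero]

lemma prod_map_neg (l : List ExtM₀) :
    (l.map fun x => -x).prod = (-1) ^ l.length * l.prod := by
  induction l with
  | nil => simp
  | cons x t ih =>
    rw [List.map_cons, List.prod_cons, ih, List.length_cons, List.prod_cons, pow_succ]
    have hc : Commute ((-1 : ExtM₀) ^ t.length) x :=
      (Commute.neg_one_left x).pow_left t.length
    rw [neg_mul, ← mul_assoc, ← hc.eq, mul_neg_one, neg_mul, mul_assoc]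

lemma smul_neg_pow_cancel (r : ℕ) (X Y : ExtM₀)
    (h : Y = (-1) ^ r * X) : ((-1 : ℤ) ^ r) • Y = X := by
  subst h
  rw [zsmul_eq_mul, ← mul_assoc]
  push_cast
  rw [← pow_add, ← two_mul, pow_mul, neg_one_sq, one_pow, one_mul]

end Aux

set_option maxHeartbeats 1600000 in
/--
For all `r ≥ 1` and all partitions `λ ∈ 𝒫_r` (encoded as an antitone
`lam : Fin r → ℕ` with `lam 0 = λ₁`), one has `σ̄_r [b]^r_λ = [b]^r_{λ+(1^r)}` and
`σ̄_{-r} [b]^r_λ = [b]^r_{λ-(1^r)}`, the latter being `0` when `λ_r = 0` (convention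
`b_k = 0` for `k < 0`).  Here `σ̄_r = (-1)^r ⬝ (coefficient of z^r of σ̄₊(z))` and
`σ̄_{-r} = (-1)^r ⬝ (coefficient of z^{-r} of σ̄₋(z))`.
-/
theorem sigmaBar_pm_r_on_basis
    (r : ℕ) (hr : 1 ≤ r) (lam : Fin r → ℕ) (hlam : Antitone lam)
    (sbp : ℕ → Module.End ℤ ExtM₀) (hsbp : IsSigmaBarPlus sbp)
    (sbm : ℕ → Module.End ℤ ExtM₀) (hsbm : IsSigmaBarMinus sbm) :
    ((-1 : ℤ) ^ r) • sbp r (bwedge r lam) = bwedge r (fun i => lam i + 1) ∧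
    ((-1 : ℤ) ^ r) • sbm r (bwedge r lam) =
      (if 1 ≤ lam ⟨r - 1, by omega⟩ then bwedge r (fun i => lam i - 1) else 0) := by
  obtain ⟨hpHS, h0p, h1p, h2p⟩ := hsbp
  obtain ⟨hmHS, h0m, h1m, h2m⟩ := hsbm
  set l : List ExtM₀ := List.ofFn fun i : Fin r => b (i.1 + lam i.rev) with hl
  have hlen : l.length = r := by rw [hl, List.length_ofFn]
  have hb : ∀ x ∈ l, ∃ j, x = b j := by
    intro x hx
    rw [hl, List.mem_ofFn] at hx
    obtain ⟨i, hi⟩ := hx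
    exact ⟨_, hi.symm⟩
  have hbw : bwedge r lam = l.prod := rfl
  constructor
  · -- plus part
    have keyp : sbp r l.prod = (l.map fun x => sbp 1 x).prod := by
      conv_lhs => rw [← hlen]
      exact hs_prod_top hpHS l
        (fun x hx => by obtain ⟨j, rfl⟩ := hb x hx; exact h0p j)
        (fun x hx i hi => by obtain ⟨j, rfl⟩ := hb x hx; exact h2p i j hi)
    have hmap : (l.map fun x => sbp 1 x)
        = (List.ofFn fun i : Fin r => b (i.1 + (lam i.rev + 1))).map fun x => -x := by
      rw [hl, List.map_ofFn, List.map_ofFn]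
      congr 1
      funext i
      simp only [Function.comp_apply]
      rw [h1p, Nat.add_assoc]
    apply smul_neg_pow_cancel
    rw [hbw, keyp, hmap, prod_map_neg, List.length_ofFn]
    rfl
  · -- minus part
    have keym : sbm r l.prod = (l.map fun x => sbm 1 x).prod := by
      conv_lhs => rw [← hlen]
      exact hs_prod_top hmHS l
        (fun x hx => by obtain ⟨j, rfl⟩ := hb x hx; exact h0m j)
        (fun x hx i hi => by obtain ⟨j, rfl⟩ := hb x hx; exact h2m i j hi)
    by_cases hpos : 1 ≤ lam ⟨r - 1, by omega⟩
    · rw [if_pos hpos]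
      have hall : ∀ i : Fin r, 1 ≤ lam i := by
        intro i
        refine le_trans hpos (hlam ?_)
        rw [Fin.le_def]
        simp only
        omega
      have hmap : (l.map fun x => sbm 1 x)
          = (List.ofFn fun i : Fin r => b (i.1 + (lam i.rev - 1))).map fun x => -x := by
        rw [hl, List.map_ofFn, List.map_ofFn]
        congr 1
        funext i
        simp only [Function.comp_apply]
        have h1 : i.1 + lam i.rev - 1 = i.1 + (lam i.rev - 1) := by
          have := hall i.rev; omega
        rw [h1m, if_pos (by have := hall i.rev; omega), h1]
      apply smul_neg_pow_cancel
      rw [hbw, keym, hmap, prod_map_neg, List.length_ofFn]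
      rfl
    · rw [if_neg hpos, hbw, keym]
      have hl0 : lam (⟨r - 1, by omega⟩ : Fin r) = 0 := Nat.eq_zero_of_not_pos hpos
      have hrev : Fin.rev (⟨0, by omega⟩ : Fin r) = ⟨r - 1, by omega⟩ :=
        Fin.ext (by simp [Fin.val_rev])
      have hval : b ((⟨0, by omega⟩ : Fin r).1 + lam (Fin.rev ⟨0, by omega⟩)) = b 0 := by
        congr 1
        rw [hrev, hl0]
      have hmem : b 0 ∈ l := by
        show b 0 ∈ List.ofFn fun i : Fin r => b (i.1 + lam i.rev)
        rw [List.mem_ofFn]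
        exact ⟨⟨0, by omega⟩, hval⟩
      have hzero : (0 : ExtM₀) ∈ l.map fun x => sbm 1 x := by
        rw [List.mem_map]
        exact ⟨b 0, hmem, by rw [h1m]; simp⟩
      rw [List.prod_eq_zero hzero, smul_zero]
end

section
/- For every r ≥ 1 and every m ∈ ⋀^r M₀, the equality σ̄₊(z)m = (−1)^r z^r σ̄₋(z)(σ̄_r m) holds (as an identity of coefficients of the two Laurent expansions in ⋀^r M₀). -/
open ExteriorAlgebra

lemma aux_genext {f g : M₀ →ₗ[ℤ] ExtM₀}
    (h : ∀ j, f (Finsupp.single j 1) = g (Finsupp.single j 1)) (v : M₀) : f v = g v :=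
  DFunLike.congr_fun (Finsupp.lhom_ext fun a c => by
    rw [← Finsupp.smul_single_one a c, map_smul, map_smul, h]) v

noncomputable def aux_Sh : M₀ →ₗ[ℤ] M₀ := Finsupp.lmapDomain ℤ ℤ (· + 1)

lemma aux_Sh_single (j : ℕ) (c : ℤ) : aux_Sh (Finsupp.single j c) = Finsupp.single (j+1) c := by
  simp [aux_Sh]

section ops
variable {sbp sbm : ℕ → Module.End ℤ ExtM₀}

lemma sbp0_ι (hsbp : IsSigmaBarPlus sbp) (v : M₀) : sbp 0 (ι ℤ v) = ι ℤ v :=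
  aux_genext (f := (sbp 0).comp (ι ℤ)) (g := ι ℤ) (fun j => hsbp.2.1 j) v

lemma sbp1_ι (hsbp : IsSigmaBarPlus sbp) (v : M₀) : sbp 1 (ι ℤ v) = -(ι ℤ (aux_Sh v)) :=
  aux_genext (f := (sbp 1).comp (ι ℤ)) (g := -((ι ℤ).comp aux_Sh)) (fun j => by
    simpa [aux_Sh_single, b] using hsbp.2.2.1 j) v

lemma sbpi_ι (hsbp : IsSigmaBarPlus sbp) (i : ℕ) (hi : 2 ≤ i) (v : M₀) : sbp i (ι ℤ v) = 0 :=
  aux_genext (f := (sbp i).comp (ι ℤ)) (g := 0) (fun j => hsbp.2.2.2 i j hi) v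

lemma sbm0_ι (hsbm : IsSigmaBarMinus sbm) (v : M₀) : sbm 0 (ι ℤ v) = ι ℤ v :=
  aux_genext (f := (sbm 0).comp (ι ℤ)) (g := ι ℤ) (fun j => hsbm.2.1 j) v

lemma sbm1_ιSh (hsbm : IsSigmaBarMinus sbm) (v : M₀) : sbm 1 (ι ℤ (aux_Sh v)) = -(ι ℤ v) :=
  aux_genext (f := ((sbm 1).comp (ι ℤ)).comp aux_Sh) (g := -(ι ℤ)) (fun j => by
    have h := hsbm.2.2.1 (j+1)
    rw [if_pos (Nat.succ_le_succ (Nat.zero_le j)), Nat.add_sub_cancel] at h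
    simp only [aux_Sh_single, LinearMap.comp_apply, LinearMap.neg_apply]
    simpa [b] using h) v

lemma sbmi_ι (hsbm : IsSigmaBarMinus sbm) (i : ℕ) (hi : 2 ≤ i) (v : M₀) : sbm i (ι ℤ v) = 0 :=
  aux_genext (f := (sbm i).comp (ι ℤ)) (g := 0) (fun j => hsbm.2.2.2 i j hi) v
end ops

lemma aux_D0_mul {D : ℕ → Module.End ℤ ExtM₀} (hD : IsHSFamily D) (x y : ExtM₀) :
    D 0 (x * y) = D 0 x * D 0 y := by
  rw [hD.1]; simp

lemma aux_Dsucc_mul {D : ℕ → Module.End ℤ ExtM₀} (hD : IsHSFamily D) {a : ExtM₀}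
    (ha0 : D 0 a = a) (ha2 : ∀ i, 2 ≤ i → D i a = 0) (n : ℕ) (y : ExtM₀) :
    D (n+1) (a * y) = a * D (n+1) y + D 1 a * D n y := by
  rw [hD.1, Finset.Nat.sum_antidiagonal_eq_sum_range_succ (fun i j => D i a * D j y)]
  rw [Finset.sum_range_succ', Finset.sum_range_succ']
  have h : ∀ i ∈ Finset.range n, D (i+1+1) a * D (n+1-(i+1+1)) y = 0 := fun i _ => by
    rw [ha2 _ (by omega), zero_mul]
  rw [Finset.sum_congr rfl h, Finset.sum_const_zero, zero_add, ha0]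
  simp only [Nat.add_sub_cancel, Nat.sub_zero]
  exact add_comm _ _

/-- The key inductive statement. -/
lemma aux_key {sbp sbm : ℕ → Module.End ℤ ExtM₀}
    (hsbp : IsSigmaBarPlus sbp) (hsbm : IsSigmaBarMinus sbm)
    (r : ℕ) (m : ExtM₀) (hm : m ∈ ⋀[ℤ]^r M₀) :
    (∀ k, r < k → sbp k m = 0) ∧ (∀ j, r < j → sbm j (sbp r m) = 0) ∧
      (∀ k, k ≤ r → sbp k m = sbm (r - k) (sbp r m)) := by
  induction hm using Submodule.pow_induction_on_left' with
  | algebraMap c =>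
    have h1 : ∀ k, sbp k ((algebraMap ℤ ExtM₀) c)
        = if k = 0 then (algebraMap ℤ ExtM₀) c else 0 := by
      intro k
      rw [Algebra.algebraMap_eq_smul_one, map_smul, hsbp.1.2]
      split <;> simp [Algebra.algebraMap_eq_smul_one]
    have h2 : ∀ k, sbm k ((algebraMap ℤ ExtM₀) c)
        = if k = 0 then (algebraMap ℤ ExtM₀) c else 0 := by
      intro k
      rw [Algebra.algebraMap_eq_smul_one, map_smul, hsbm.1.2]
      split <;> simp [Algebra.algebraMap_eq_smul_one]
    refine ⟨fun k hk => ?_, fun j hj => ?_, fun k hk => ?_⟩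
    · rw [h1, if_neg (by omega)]
    · rw [h1, if_pos rfl, h2, if_neg (by omega)]
    · obtain rfl : k = 0 := by omega
      rw [h1, if_pos rfl, h2, if_pos rfl]
  | add x y i hx hy ihx ihy =>
    refine ⟨fun k hk => ?_, fun j hj => ?_, fun k hk => ?_⟩
    · rw [map_add, ihx.1 k hk, ihy.1 k hk, add_zero]
    · rw [map_add, map_add, ihx.2.1 j hj, ihy.2.1 j hj, add_zero]
    · rw [map_add, map_add, map_add, ihx.2.2 k hk, ihy.2.2 k hk]
  | mem_mul g hg i x hx ih =>
    obtain ⟨v, rfl⟩ := hg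
    obtain ⟨ih1, ih2, ih3⟩ := ih
    have hsbpS : ∀ n y, sbp (n+1) (ι ℤ v * y) = ι ℤ v * sbp (n+1) y + -(ι ℤ (aux_Sh v)) * sbp n y := by
      intro n y
      rw [aux_Dsucc_mul hsbp.1 (sbp0_ι hsbp v) (fun l hl => sbpi_ι hsbp l hl v), sbp1_ι hsbp]
    have hsbmS : ∀ n y, sbm (n+1) (ι ℤ (aux_Sh v) * y)
        = ι ℤ (aux_Sh v) * sbm (n+1) y + -(ι ℤ v) * sbm n y := by
      intro n y
      rw [aux_Dsucc_mul hsbm.1 (sbm0_ι hsbm _) (fun l hl => sbmi_ι hsbm l hl _), sbm1_ιSh hsbm]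
    have hmain : sbp (i+1) (ι ℤ v * x) = -(ι ℤ (aux_Sh v) * sbp i x) := by
      rw [hsbpS i x, ih1 (i+1) (Nat.lt_succ_self i), mul_zero, zero_add, neg_mul]
    refine ⟨fun k hk => ?_, fun j hj => ?_, fun k hk => ?_⟩
    · obtain ⟨k', rfl⟩ : ∃ k', k = k' + 1 := ⟨k - 1, by omega⟩
      rw [hsbpS k' x, ih1 (k'+1) (by omega), ih1 k' (by omega), mul_zero, mul_zero, add_zero]
    · obtain ⟨j', rfl⟩ : ∃ j', j = j' + 1 := ⟨j - 1, by omega⟩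
      rw [hmain, map_neg, hsbmS j' (sbp i x),
        ih2 (j'+1) (by omega), ih2 j' (by omega), mul_zero, mul_zero, add_zero, neg_zero]
    · rcases k with _ | k'
      · -- k = 0
        have e0 : sbm i (sbp i x) = sbp 0 x := by
          have h := ih3 0 (Nat.zero_le i)
          simpa using h.symm
        rw [Nat.sub_zero, hmain, map_neg, hsbmS i (sbp i x),
          ih2 (i+1) (Nat.lt_succ_self i), mul_zero, zero_add, e0,
          aux_D0_mul hsbp.1, sbp0_ι hsbp]
        noncomm_ring
      · rcases Nat.lt_or_ge k' i with hki | hki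
        · -- k' + 1 ≤ i
          have harith : (i + 1) - (k' + 1) = (i - (k' + 1)) + 1 := by omega
          have e1 : sbm (i - (k' + 1) + 1) (sbp i x) = sbp k' x := by
            have h := ih3 k' (by omega)
            rw [show i - k' = i - (k' + 1) + 1 by omega] at h
            exact h.symm
          have e2 : sbm (i - (k' + 1)) (sbp i x) = sbp (k' + 1) x :=
            (ih3 (k' + 1) (by omega)).symm
          rw [harith, hmain, map_neg, hsbmS (i - (k' + 1)) (sbp i x), e1, e2, hsbpS k' x]
          noncomm_ring
        · -- k' = i
          rw [show k' = i from by omega]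
          have e0 : sbm 0 (sbp i x) = sbp i x := by
            have h := ih3 i le_rfl
            rw [Nat.sub_self] at h
            exact h.symm
          show sbp (i+1) ((ι ℤ) v * x) = sbm ((i+1) - (i+1)) (sbp (i+1) ((ι ℤ) v * x))
          rw [Nat.sub_self, hmain, map_neg, aux_D0_mul hsbm.1, sbm0_ι hsbm, e0]

/--
for every `r ≥ 1` and every `m ∈ ⋀^r M₀`, the Laurent-series identity
`σ̄₊(z) m = (-1)^r z^r σ̄₋(z)(σ̄_r m)` holds, coefficient by coefficient (coefficient of
`z^k`, `k ∈ ℤ`).  Here `sbp i` is the coefficient of `zⁱ` in `σ̄₊(z)` (so `σ̄_r m`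
is `(-1)^r • sbp r m`) and `sbm i` is the coefficient of `z⁻ⁱ` in `σ̄₋(z)`.
-/
theorem sigmaBarPlus_eq_shifted_sigmaBarMinus
    (r : ℕ) (hr : 1 ≤ r) (m : ExtM₀) (hm : m ∈ ⋀[ℤ]^r M₀)
    (sbp : ℕ → Module.End ℤ ExtM₀) (hsbp : IsSigmaBarPlus sbp)
    (sbm : ℕ → Module.End ℤ ExtM₀) (hsbm : IsSigmaBarMinus sbm) :
    ∀ k : ℤ,
      (if 0 ≤ k then sbp k.toNat m else 0) =
        (if k ≤ (r : ℤ) then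
          ((-1 : ℤ) ^ r) • sbm ((r : ℤ) - k).toNat (((-1 : ℤ) ^ r) • sbp r m)
        else 0) := by
  intro k
  obtain ⟨key1, key2, key3⟩ := aux_key hsbp hsbm r m hm
  have hsgn : ∀ (n : ℕ) (y : ExtM₀), ((-1:ℤ)^r) • sbm n (((-1:ℤ)^r) • y) = sbm n y := by
    intro n y
    rw [map_smul, smul_smul, ← pow_add, ← two_mul, pow_mul]
    norm_num
  by_cases h1 : (0:ℤ) ≤ k
  · by_cases h2 : k ≤ (r:ℤ)
    · rw [if_pos h1, if_pos h2, hsgn,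
        show ((r:ℤ) - k).toNat = r - k.toNat from by omega]
      exact key3 k.toNat (by omega)
    · rw [if_pos h1, if_neg h2, key1 k.toNat (by omega)]
  · rw [if_neg h1, if_pos (by omega), hsgn, key2 _ (by omega)]
end

section
/- For every r ≥ 1 and every m ∈ ⋀^r M₀, the equality σ₊(z)b₀ ∧ m = (−1)^r z^r σ₊(z) σ̄₋(z)(b₀ ∧ σ̄_r m) holds in ⋀^{r+1}M₀ (as an identity of coefficients of the two Laurent expansions). -/
open ExteriorAlgebra

noncomputable def Shn (i : ℕ) : M₀ →ₗ[ℤ] M₀ := Finsupp.lmapDomain ℤ ℤ (· + i)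

noncomputable def Tsh : M₀ →ₗ[ℤ] M₀ := Finsupp.lsum ℤ fun j =>
  match j with
  | 0 => 0
  | k + 1 => Finsupp.lsingle k

lemma Shn_single (i a : ℕ) (c : ℤ) : Shn i (Finsupp.single a c) = Finsupp.single (a + i) c := by
  simp [Shn]

lemma Tsh_single_zero (c : ℤ) : Tsh (Finsupp.single 0 c) = 0 := by
  simp [Tsh]

lemma Tsh_single_succ (k : ℕ) (c : ℤ) : Tsh (Finsupp.single (k + 1) c) = Finsupp.single k c := by
  simp [Tsh]

lemma Tsh_Shn1 (v : M₀) : Tsh (Shn 1 v) = v := by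
  have : (Tsh ∘ₗ Shn 1) = (LinearMap.id : M₀ →ₗ[ℤ] M₀) := by
    apply Finsupp.lhom_ext
    intro a c
    simp [Shn_single, Tsh_single_succ]
  exact DFunLike.congr_fun this v

lemma Shn_Shn1 (p : ℕ) (v : M₀) : Shn p (Shn 1 v) = Shn (p + 1) v := by
  have : (Shn p ∘ₗ Shn 1) = Shn (p + 1) := by
    apply Finsupp.lhom_ext
    intro a c
    simp only [LinearMap.comp_apply, Shn_single]
    rw [Nat.add_assoc, Nat.add_comm 1 p]
  exact DFunLike.congr_fun this v

lemma Shn_zero_apply (v : M₀) : Shn 0 v = v := by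
  have : Shn 0 = (LinearMap.id : M₀ →ₗ[ℤ] M₀) := by
    apply Finsupp.lhom_ext
    intro a c
    simp [Shn_single]
  exact DFunLike.congr_fun this v

lemma iota_single (a : ℕ) (c : ℤ) :
    ExteriorAlgebra.ι ℤ (Finsupp.single a c : M₀) = c • b a := by
  rw [show (Finsupp.single a c : M₀) = c • Finsupp.single a 1 by
        simp [Finsupp.smul_single], map_smul]
  rfl

lemma end_iota (L : Module.End ℤ ExtM₀) (f : M₀ →ₗ[ℤ] ExtM₀)
    (h : ∀ a : ℕ, L (b a) = f (Finsupp.single a 1)) (v : M₀) :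
    L (ExteriorAlgebra.ι ℤ v) = f v := by
  have : (L ∘ₗ ExteriorAlgebra.ι ℤ) = f := by
    apply Finsupp.lhom_ext
    intro a c
    simp only [LinearMap.comp_apply, iota_single, map_smul, h]
    rw [show (Finsupp.single a c : M₀) = c • Finsupp.single a 1 by
          simp [Finsupp.smul_single], map_smul]
  exact DFunLike.congr_fun this v

section Ops

variable {sp sbp sbm : ℕ → Module.End ℤ ExtM₀}

lemma sp_iota (hsp : IsSigmaPlus sp) (i : ℕ) (v : M₀) :
    sp i (ExteriorAlgebra.ι ℤ v) = ExteriorAlgebra.ι ℤ (Shn i v) :=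
  end_iota _ (ExteriorAlgebra.ι ℤ ∘ₗ Shn i)
    (fun a => by
      simp only [LinearMap.comp_apply, Shn_single]
      show sp i (b a) = b (a + i)
      rw [hsp.2 i a, Nat.add_comm]) v

lemma hs_iota0 {D : ℕ → Module.End ℤ ExtM₀} (h0 : ∀ j, D 0 (b j) = b j) (v : M₀) :
    D 0 (ExteriorAlgebra.ι ℤ v) = ExteriorAlgebra.ι ℤ v :=
  end_iota _ (ExteriorAlgebra.ι ℤ) (fun a => h0 a) v

lemma hs_iota2 {D : ℕ → Module.End ℤ ExtM₀} (h2 : ∀ i j, 2 ≤ i → D i (b j) = 0)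
    {p : ℕ} (hp : 2 ≤ p) (v : M₀) : D p (ExteriorAlgebra.ι ℤ v) = 0 :=
  end_iota _ (0 : M₀ →ₗ[ℤ] ExtM₀) (fun a => by simp [h2 p a hp]) v

lemma sbp_iota1 (hsbp : IsSigmaBarPlus sbp) (v : M₀) :
    sbp 1 (ExteriorAlgebra.ι ℤ v) = -ExteriorAlgebra.ι ℤ (Shn 1 v) :=
  end_iota _ (-(ExteriorAlgebra.ι ℤ ∘ₗ Shn 1))
    (fun a => by
      simp only [LinearMap.neg_apply, LinearMap.comp_apply, Shn_single]
      show sbp 1 (b a) = -b (a + 1)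
      exact hsbp.2.2.1 a) v

lemma sbm_iota1 (hsbm : IsSigmaBarMinus sbm) (v : M₀) :
    sbm 1 (ExteriorAlgebra.ι ℤ v) = -ExteriorAlgebra.ι ℤ (Tsh v) :=
  end_iota _ (-(ExteriorAlgebra.ι ℤ ∘ₗ Tsh))
    (fun a => by
      rcases a with _ | k
      · simp [hsbm.2.2.1 0, Tsh_single_zero]
      · simp only [LinearMap.neg_apply, LinearMap.comp_apply, Tsh_single_succ]
        show sbm 1 (b (k + 1)) = -b k
        rw [hsbm.2.2.1 (k+1)]
        simp) v

end Ops

section Prod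
variable {D : ℕ → Module.End ℤ ExtM₀}

lemma hs_mul_le1
    (hmul : ∀ (n : ℕ) (x y : ExtM₀),
      D n (x * y) = ∑ p ∈ Finset.HasAntidiagonal.antidiagonal n, (D p.1 x) * (D p.2 y))
    (a y : ExtM₀) (ha : ∀ p, 2 ≤ p → D p a = 0) (j : ℕ) :
    D j (a * y) = D 0 a * D j y + (if 1 ≤ j then D 1 a * D (j - 1) y else 0) := by
  rw [hmul, Finset.Nat.sum_antidiagonal_eq_sum_range_succ_mk]
  match j with
  | 0 => simp
  | (j + 1) =>
    have h2 : (2:ℕ) ≤ j + 1 + 1 := by omega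
    have hsub := Finset.sum_subset (Finset.range_subset_range.mpr h2)
      (f := fun p => D p a * D (j + 1 - p) y)
      (fun p hp hp2 => by
        have : 2 ≤ p := by
          simp only [Finset.mem_range] at hp2; omega
        show D p a * D (j + 1 - p) y = 0
        rw [ha p this, zero_mul])
    rw [← hsub]
    simp [Finset.sum_range_succ]

lemma hs_mul_range
    (hmul : ∀ (n : ℕ) (x y : ExtM₀),
      D n (x * y) = ∑ p ∈ Finset.HasAntidiagonal.antidiagonal n, (D p.1 x) * (D p.2 y))
    (i : ℕ) (x y : ExtM₀) :
    D i (x * y) = ∑ p ∈ Finset.range (i + 1), D p x * D (i - p) y := by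
  rw [hmul, Finset.Nat.sum_antidiagonal_eq_sum_range_succ_mk]

lemma hs_prod_vanish
    (hmul : ∀ (n : ℕ) (x y : ExtM₀),
      D n (x * y) = ∑ p ∈ Finset.HasAntidiagonal.antidiagonal n, (D p.1 x) * (D p.2 y))
    (hone : ∀ n : ℕ, D n (1 : ExtM₀) = if n = 0 then 1 else 0)
    (hι2 : ∀ (p : ℕ) (v : M₀), 2 ≤ p → D p (ExteriorAlgebra.ι ℤ v) = 0) :
    ∀ (l : List M₀) (j : ℕ), l.length < j →
      D j ((l.map (ExteriorAlgebra.ι ℤ)).prod) = 0 := by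
  intro l
  induction l with
  | nil =>
    intro j hj
    simp only [List.map_nil, List.prod_nil, hone]
    rw [if_neg (by omega)]
  | cons u tl ih =>
    intro j hj
    simp only [List.map_cons, List.prod_cons, List.length_cons] at *
    rw [hs_mul_le1 hmul _ _ (fun p hp => hι2 p u hp) j]
    rw [ih j (by omega)]
    rcases Nat.lt_or_ge j 1 with h1 | h1
    · rw [if_neg (by omega)]; simp
    · rw [if_pos h1, ih (j - 1) (by omega)]; simp

end Prod

section Ops2
variable {sp sbp sbm : ℕ → Module.End ℤ ExtM₀}

lemma sbp_prod (hsbp : IsSigmaBarPlus sbp) : ∀ (l : List M₀),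
    sbp l.length ((l.map (ExteriorAlgebra.ι ℤ)).prod) =
      ((-1 : ℤ) ^ l.length) • ((l.map (Shn 1)).map (ExteriorAlgebra.ι ℤ)).prod := by
  intro l
  induction l with
  | nil => simp [hsbp.1.2 0]
  | cons u tl ih =>
    simp only [List.map_cons, List.prod_cons, List.length_cons]
    rw [hs_mul_le1 hsbp.1.1 _ _ (fun p hp => hs_iota2 hsbp.2.2.2 hp u)]
    rw [hs_prod_vanish hsbp.1.1 hsbp.1.2 (fun p v hp => hs_iota2 hsbp.2.2.2 hp v) tl
      (tl.length + 1) (by omega)]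
    rw [if_pos (by omega)]
    simp only [Nat.add_sub_cancel, mul_zero, zero_add]
    rw [sbp_iota1 hsbp, ih]
    rw [neg_mul, mul_smul_comm]
    rw [pow_succ]
    rw [mul_smul, neg_smul, one_smul]
    simp

lemma sbm_vanish_bound (hsbm : IsSigmaBarMinus sbm) (x : ExtM₀) :
    ∃ N : ℕ, ∀ j : ℕ, N ≤ j → sbm j x = 0 := by
  induction x using ExteriorAlgebra.induction with
  | algebraMap r =>
    refine ⟨1, fun j hj => ?_⟩
    rw [Algebra.algebraMap_eq_smul_one, map_smul, hsbm.1.2, if_neg (by omega), smul_zero]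
  | ι v =>
    exact ⟨2, fun j hj => hs_iota2 hsbm.2.2.2 hj v⟩
  | mul x y hx hy =>
    obtain ⟨Nx, hNx⟩ := hx
    obtain ⟨Ny, hNy⟩ := hy
    refine ⟨Nx + Ny, fun j hj => ?_⟩
    rw [hsbm.1.1]
    apply Finset.sum_eq_zero
    intro p hp
    rw [Finset.HasAntidiagonal.mem_antidiagonal] at hp
    rcases le_or_gt Nx p.1 with h | h
    · rw [hNx p.1 h, zero_mul]
    · rw [hNy p.2 (by omega), mul_zero]
  | add x y hx hy =>
    obtain ⟨Nx, hNx⟩ := hx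
    obtain ⟨Ny, hNy⟩ := hy
    exact ⟨max Nx Ny, fun j hj => by
      rw [map_add, hNx j (by omega), hNy j (by omega), add_zero]⟩

end Ops2

noncomputable def gco (sp sbm : ℕ → Module.End ℤ ExtM₀) (x : ExtM₀) (c : ℤ) (i : ℕ) : ExtM₀ :=
  if 0 ≤ (i : ℤ) - c then sp i (sbm ((i : ℤ) - c).toNat x) else 0

noncomputable def Hco (sp sbm : ℕ → Module.End ℤ ExtM₀) (x : ExtM₀) (c : ℤ) : ExtM₀ :=
  ∑ᶠ i : ℕ, gco sp sbm x c i

section HcoL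
variable {sp sbm : ℕ → Module.End ℤ ExtM₀}

lemma gco_eq_zero {x : ExtM₀} {c : ℤ} {N : ℕ} (hN : ∀ j, N ≤ j → sbm j x = 0)
    {i : ℕ} (hi : c + N ≤ (i : ℤ)) : gco sp sbm x c i = 0 := by
  unfold gco
  split_ifs with h
  · rw [hN _ (by omega), map_zero]
  · rfl

lemma Hco_eq_sum {x : ExtM₀} {c : ℤ} {N : ℕ} (hN : ∀ j, N ≤ j → sbm j x = 0)
    (M : ℕ) (hM : c + N ≤ (M : ℤ)) :
    Hco sp sbm x c = ∑ i ∈ Finset.range M, gco sp sbm x c i := by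
  apply finsum_eq_sum_of_support_subset
  intro i hi
  simp only [Function.mem_support] at hi
  simp only [Finset.coe_range, Set.mem_Iio]
  by_contra hM'
  exact hi (gco_eq_zero hN (by omega))

lemma finsum_bridge (x : ExtM₀) (c : ℤ) :
    (∑ᶠ (i : ℕ) (j : ℕ), if (i : ℤ) - (j : ℤ) = c then sp i (sbm j x) else 0) =
      Hco sp sbm x c := by
  unfold Hco
  refine finsum_congr fun i => ?_
  by_cases h : 0 ≤ (i : ℤ) - c
  · rw [finsum_eq_single _ (((i : ℤ) - c).toNat) (fun j hj => if_neg (by omega))]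
    rw [if_pos (by omega), gco, if_pos h]
  · rw [finsum_eq_zero_of_forall_eq_zero (fun j => if_neg (by omega))]
    rw [gco, if_neg h]

lemma Hco_add (hsbm : IsSigmaBarMinus sbm) (x y : ExtM₀) (c : ℤ) :
    Hco sp sbm (x + y) c = Hco sp sbm x c + Hco sp sbm y c := by
  obtain ⟨Nx, hNx⟩ := sbm_vanish_bound hsbm x
  obtain ⟨Ny, hNy⟩ := sbm_vanish_bound hsbm y
  set N := max Nx Ny with hNdef
  have hx : ∀ j, N ≤ j → sbm j x = 0 := fun j hj => hNx j (by omega)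
  have hy : ∀ j, N ≤ j → sbm j y = 0 := fun j hj => hNy j (by omega)
  have hxy : ∀ j, N ≤ j → sbm j (x + y) = 0 := fun j hj => by
    rw [map_add, hx j hj, hy j hj, add_zero]
  set M := (c + N).toNat with hMdef
  have hM : c + N ≤ (M : ℤ) := Int.self_le_toNat _
  rw [Hco_eq_sum hxy M hM, Hco_eq_sum hx M hM, Hco_eq_sum hy M hM,
    ← Finset.sum_add_distrib]
  refine Finset.sum_congr rfl fun i _ => ?_
  unfold gco
  split_ifs with h
  · rw [map_add, map_add]
  · rw [add_zero]

end HcoL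

section Swap
variable {sp sbm : ℕ → Module.End ℤ ExtM₀}

lemma swapSum (hsp : IsSigmaPlus sp) (hsbm : IsSigmaBarMinus sbm)
    (vs : List M₀) (w' : M₀) (c' : ℤ) (M : ℕ)
    (hM : c' + vs.length + 1 ≤ (M : ℤ)) :
    ∑ i ∈ Finset.range M,
        (if 0 ≤ (i : ℤ) - c' then
          ∑ p ∈ Finset.range (i + 1),
            ExteriorAlgebra.ι ℤ (Shn p w') *
              sp (i - p) (sbm ((i : ℤ) - c').toNat ((vs.map (ExteriorAlgebra.ι ℤ)).prod))
        else 0) =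
      ∑ p ∈ Finset.range M,
        ExteriorAlgebra.ι ℤ (Shn p w') *
          Hco sp sbm ((vs.map (ExteriorAlgebra.ι ℤ)).prod) (c' - p) := by
  set y := (vs.map (ExteriorAlgebra.ι ℤ)).prod with hy
  have hbound : ∀ j, vs.length + 1 ≤ j → sbm j y = 0 := fun j hj =>
    hs_prod_vanish hsbm.1.1 hsbm.1.2 (fun p v hp => hs_iota2 hsbm.2.2.2 hp v) vs j (by omega)
  have e1 : ∀ i ∈ Finset.range M,
      (if 0 ≤ (i : ℤ) - c' then
        ∑ p ∈ Finset.range (i + 1),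
          ExteriorAlgebra.ι ℤ (Shn p w') * sp (i - p) (sbm ((i : ℤ) - c').toNat y)
      else 0) =
      ∑ p ∈ Finset.range M,
        (if p ≤ i then
          (if 0 ≤ (i : ℤ) - c' then
            ExteriorAlgebra.ι ℤ (Shn p w') * sp (i - p) (sbm ((i : ℤ) - c').toNat y)
          else 0)
        else 0) := by
    intro i hi
    rw [Finset.mem_range] at hi
    rw [← Finset.sum_filter]
    have hfil : (Finset.range M).filter (· ≤ i) = Finset.range (i + 1) := by
      ext p
      simp only [Finset.mem_filter, Finset.mem_range]
      omega
    rw [hfil]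
    by_cases h : 0 ≤ (i : ℤ) - c'
    · simp only [if_pos h]
    · simp only [if_neg h, Finset.sum_const_zero]
  rw [Finset.sum_congr rfl e1, Finset.sum_comm]
  refine Finset.sum_congr rfl fun p hp => ?_
  rw [Finset.mem_range] at hp
  rw [← Finset.sum_filter]
  have hfil : (Finset.range M).filter (fun i => p ≤ i) = Finset.Ico p M := by
    ext i
    simp only [Finset.mem_filter, Finset.mem_range, Finset.mem_Ico]
    omega
  rw [hfil, Finset.sum_Ico_eq_sum_range]
  have e2 : ∀ q ∈ Finset.range (M - p),
      (if 0 ≤ ((p + q : ℕ) : ℤ) - c' then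
        ExteriorAlgebra.ι ℤ (Shn p w') *
          sp (p + q - p) (sbm (((p + q : ℕ) : ℤ) - c').toNat y)
      else 0) =
      ExteriorAlgebra.ι ℤ (Shn p w') * gco sp sbm y (c' - p) q := by
    intro q _
    have hq : p + q - p = q := by omega
    have hcast : ((p + q : ℕ) : ℤ) - c' = (q : ℤ) - (c' - p) := by push_cast; ring
    have hcond : (0 ≤ ((p + q : ℕ) : ℤ) - c') ↔ (0 ≤ (q : ℤ) - (c' - p)) := by omega
    rw [hq, hcast, gco]
    by_cases h : 0 ≤ (q : ℤ) - (c' - p)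
    · rw [if_pos h, if_pos h]
    · rw [if_neg h, if_neg h, mul_zero]
  rw [Finset.sum_congr rfl e2, ← Finset.mul_sum]
  congr 1
  have hcov : (c' - p) + (vs.length + 1) ≤ ((M - p : ℕ) : ℤ) := by
    have : ((M - p : ℕ) : ℤ) = (M : ℤ) - (p : ℤ) := by omega
    omega
  rw [Hco_eq_sum hbound (M - p) hcov]

end Swap

section Step
variable {sp sbm : ℕ → Module.End ℤ ExtM₀}

lemma collapseSum (y : ExtM₀) (w' : M₀) (d : ℤ) (Y : ExtM₀)
    (hy : ∀ c, Hco sp sbm y c = if c = d then Y else 0)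
    (c' : ℤ) (M : ℕ) (hmem : c' - d < (M : ℤ)) :
    ∑ p ∈ Finset.range M, ExteriorAlgebra.ι ℤ (Shn p w') * Hco sp sbm y (c' - p) =
      if 0 ≤ c' - d then ExteriorAlgebra.ι ℤ (Shn (c' - d).toNat w') * Y else 0 := by
  have e : ∀ p : ℕ, ExteriorAlgebra.ι ℤ (Shn p w') * Hco sp sbm y (c' - p) =
      if c' - p = d then ExteriorAlgebra.ι ℤ (Shn p w') * Y else 0 := by
    intro p
    rw [hy]
    by_cases h : c' - p = d
    · rw [if_pos h, if_pos h]
    · rw [if_neg h, if_neg h, mul_zero]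
  rw [Finset.sum_congr rfl fun p _ => e p]
  by_cases h1 : 0 ≤ c' - d
  · rw [Finset.sum_eq_single_of_mem ((c' - d).toNat)
      (Finset.mem_range.mpr (by omega))
      (fun p _ hp => if_neg (by omega))]
    rw [if_pos (by omega), if_pos h1]
  · rw [Finset.sum_eq_zero fun p _ => if_neg (by omega), if_neg h1]

lemma stepLemma (hsp : IsSigmaPlus sp) (hsbm : IsSigmaBarMinus sbm)
    (w : M₀) (vs : List M₀) (d : ℤ) (Y : ExtM₀)
    (hd : -(vs.length : ℤ) ≤ d)
    (hy : ∀ c, Hco sp sbm ((vs.map (ExteriorAlgebra.ι ℤ)).prod) c = if c = d then Y else 0)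
    (c : ℤ) :
    Hco sp sbm (ExteriorAlgebra.ι ℤ w * (vs.map (ExteriorAlgebra.ι ℤ)).prod) c =
      (if 0 ≤ c - d then ExteriorAlgebra.ι ℤ (Shn (c - d).toNat w) * Y else 0) -
      (if 0 ≤ c + 1 - d then ExteriorAlgebra.ι ℤ (Shn (c + 1 - d).toNat (Tsh w)) * Y else 0) := by
  set y := (vs.map (ExteriorAlgebra.ι ℤ)).prod with hydef
  have hbig : ∀ j, vs.length + 2 ≤ j → sbm j (ExteriorAlgebra.ι ℤ w * y) = 0 := by
    intro j hj
    have heq : ExteriorAlgebra.ι ℤ w * y = ((w :: vs).map (ExteriorAlgebra.ι ℤ)).prod := by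
      simp [hydef]
    rw [heq]
    exact hs_prod_vanish hsbm.1.1 hsbm.1.2 (fun p v hp => hs_iota2 hsbm.2.2.2 hp v)
      (w :: vs) j (by simp only [List.length_cons]; omega)
  rw [Hco_eq_sum hbig (c.toNat + vs.length + 2) (by omega)]
  have epoint : ∀ i ∈ Finset.range (c.toNat + vs.length + 2),
      gco sp sbm (ExteriorAlgebra.ι ℤ w * y) c i =
      (if 0 ≤ (i : ℤ) - c then
        ∑ p ∈ Finset.range (i + 1),
          ExteriorAlgebra.ι ℤ (Shn p w) * sp (i - p) (sbm ((i : ℤ) - c).toNat y)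
      else 0) -
      (if 0 ≤ (i : ℤ) - (c + 1) then
        ∑ p ∈ Finset.range (i + 1),
          ExteriorAlgebra.ι ℤ (Shn p (Tsh w)) * sp (i - p) (sbm ((i : ℤ) - (c + 1)).toNat y)
      else 0) := by
    intro i _
    unfold gco
    by_cases h : 0 ≤ (i : ℤ) - c
    · rw [if_pos h, if_pos h]
      rw [hs_mul_le1 hsbm.1.1 _ _ (fun p hp => hs_iota2 hsbm.2.2.2 hp w)
        (((i : ℤ) - c).toNat), map_add]
      have hfirst : sp i (sbm 0 (ExteriorAlgebra.ι ℤ w) * sbm (((i : ℤ) - c).toNat) y) =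
          ∑ p ∈ Finset.range (i + 1),
            ExteriorAlgebra.ι ℤ (Shn p w) * sp (i - p) (sbm (((i : ℤ) - c).toNat) y) := by
        rw [hs_iota0 hsbm.2.1, hs_mul_range hsp.1.1]
        exact Finset.sum_congr rfl fun p _ => by rw [sp_iota hsp]
      rw [hfirst]
      by_cases h1 : 1 ≤ ((i : ℤ) - c).toNat
      · rw [if_pos h1, if_pos (show (0 : ℤ) ≤ (i : ℤ) - (c + 1) by omega)]
        have hj1 : ((i : ℤ) - c).toNat - 1 = ((i : ℤ) - (c + 1)).toNat := by omega
        rw [sbm_iota1 hsbm, neg_mul, map_neg, hs_mul_range hsp.1.1, hj1]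
        have hsec : (∑ p ∈ Finset.range (i + 1),
              sp p (ExteriorAlgebra.ι ℤ (Tsh w)) *
                sp (i - p) (sbm (((i : ℤ) - (c + 1)).toNat) y)) =
            ∑ p ∈ Finset.range (i + 1),
              ExteriorAlgebra.ι ℤ (Shn p (Tsh w)) *
                sp (i - p) (sbm (((i : ℤ) - (c + 1)).toNat) y) :=
          Finset.sum_congr rfl fun p _ => by rw [sp_iota hsp]
        rw [hsec]
        exact (sub_eq_add_neg _ _).symm
      · rw [if_neg h1, if_neg (show ¬ (0 : ℤ) ≤ (i : ℤ) - (c + 1) by omega)]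
        rw [map_zero, add_zero, sub_zero]
    · rw [if_neg h, if_neg h, if_neg (show ¬ (0 : ℤ) ≤ (i : ℤ) - (c + 1) by omega), sub_zero]
  rw [Finset.sum_congr rfl epoint, Finset.sum_sub_distrib]
  rw [swapSum hsp hsbm vs w c (c.toNat + vs.length + 2) (by omega),
      swapSum hsp hsbm vs (Tsh w) (c + 1) (c.toNat + vs.length + 2) (by omega)]
  rw [collapseSum y w d Y hy c (c.toNat + vs.length + 2) (by omega),
      collapseSum y (Tsh w) d Y hy (c + 1) (c.toNat + vs.length + 2) (by omega)]

end Step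

section Main
variable {sp sbp sbm : ℕ → Module.End ℤ ExtM₀}

lemma Hco_one (hsp : IsSigmaPlus sp) (hsbm : IsSigmaBarMinus sbm) (c : ℤ) :
    Hco sp sbm (1 : ExtM₀) c = if c = 0 then 1 else 0 := by
  have hb : ∀ j, 1 ≤ j → sbm j (1 : ExtM₀) = 0 := fun j hj => by
    rw [hsbm.1.2, if_neg (by omega)]
  rw [Hco_eq_sum hb (c.toNat + 1) (by omega)]
  by_cases hc : c = 0
  · subst hc
    simp only [Int.toNat_zero, zero_add, Finset.sum_range_one, if_pos rfl]
    unfold gco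
    norm_num
    rw [hsbm.1.2, if_pos rfl, hsp.1.2, if_pos rfl]
  · rw [if_neg hc]
    apply Finset.sum_eq_zero
    intro i _
    unfold gco
    split_ifs with h
    · by_cases h2 : ((i : ℤ) - c).toNat = 0
      · rw [h2, hsbm.1.2, if_pos rfl, hsp.1.2, if_neg (by omega)]
      · rw [hsbm.1.2, if_neg h2, map_zero]
    · rfl

lemma lemA (hsp : IsSigmaPlus sp) (hsbm : IsSigmaBarMinus sbm) :
    ∀ (us : List M₀) (c : ℤ),
      Hco sp sbm (((us.map (Shn 1)).map (ExteriorAlgebra.ι ℤ)).prod) c =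
        if c = -(us.length : ℤ) then
          ((-1 : ℤ) ^ us.length) • (us.map (ExteriorAlgebra.ι ℤ)).prod
        else 0 := by
  intro us
  induction us with
  | nil =>
    intro c
    simpa using Hco_one hsp hsbm c
  | cons u tl ih =>
    intro c
    simp only [List.map_cons, List.prod_cons, List.length_cons]
    rw [stepLemma hsp hsbm (Shn 1 u) (tl.map (Shn 1)) (-(tl.length : ℤ))
      (((-1 : ℤ) ^ tl.length) • (tl.map (ExteriorAlgebra.ι ℤ)).prod)
      (by rw [List.length_map]) (fun c' => ih c') c]
    rw [Tsh_Shn1]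
    by_cases h1 : 0 ≤ c + (tl.length : ℤ)
    · rw [if_pos (by omega), if_pos (by omega), Shn_Shn1]
      have he : (c - -(tl.length : ℤ)).toNat + 1 = (c + 1 - -(tl.length : ℤ)).toNat := by omega
      rw [he, sub_self, if_neg (by push_cast; omega)]
    · by_cases h2 : 0 ≤ c + 1 + (tl.length : ℤ)
      · rw [if_neg (by omega), if_pos (by omega)]
        have he : (c + 1 - -(tl.length : ℤ)).toNat = 0 := by omega
        rw [he, Shn_zero_apply, zero_sub, if_pos (by push_cast; omega)]
        rw [mul_smul_comm, pow_succ, mul_smul, neg_smul, one_smul, smul_neg]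
      · rw [if_neg (by omega), if_neg (by omega), sub_zero, if_neg (by push_cast; omega)]

end Main

section Main2
variable {sp sbp sbm : ℕ → Module.End ℤ ExtM₀}

lemma Hco_zero (c : ℤ) : Hco sp sbm (0 : ExtM₀) c = 0 := by
  unfold Hco gco
  have : ∀ i : ℕ, (if 0 ≤ (i : ℤ) - c then sp i (sbm ((i : ℤ) - c).toNat (0 : ExtM₀)) else 0)
      = 0 := by
    intro i; split_ifs <;> simp
  simp only [this, finsum_zero]

lemma Hco_smul (hsbm : IsSigmaBarMinus sbm) (a : ℤ) (x : ExtM₀) (c : ℤ) :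
    Hco sp sbm (a • x) c = a • Hco sp sbm x c := by
  obtain ⟨N, hN⟩ := sbm_vanish_bound hsbm x
  have hax : ∀ j, N ≤ j → sbm j (a • x) = 0 := fun j hj => by
    rw [map_smul, hN j hj, smul_zero]
  have hM : c + N ≤ ((c + N).toNat : ℤ) := Int.self_le_toNat _
  rw [Hco_eq_sum hax _ hM, Hco_eq_sum hN _ hM, Finset.smul_sum]
  refine Finset.sum_congr rfl fun i _ => ?_
  unfold gco
  split_ifs with h
  · rw [map_smul, map_smul]
  · rw [smul_zero]

lemma neg_one_pow_smul_neg_one_pow_smul (n : ℕ) (X : ExtM₀) :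
    ((-1 : ℤ) ^ n) • (((-1 : ℤ) ^ n) • X) = X := by
  rw [smul_smul, ← pow_add, Even.neg_one_pow ⟨n, rfl⟩, one_smul]

lemma mainProd (hsp : IsSigmaPlus sp) (hsbp : IsSigmaBarPlus sbp)
    (hsbm : IsSigmaBarMinus sbm) (k : ℤ) (us : List M₀) :
    (if 0 ≤ k then b k.toNat * (us.map (ExteriorAlgebra.ι ℤ)).prod else 0) =
      ((-1 : ℤ) ^ us.length) •
        Hco sp sbm
          (b 0 * (((-1 : ℤ) ^ us.length) • sbp us.length ((us.map (ExteriorAlgebra.ι ℤ)).prod)))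
          (k - us.length) := by
  rw [sbp_prod hsbp us, neg_one_pow_smul_neg_one_pow_smul]
  rw [show (b 0 : ExtM₀) = ExteriorAlgebra.ι ℤ (Finsupp.single 0 1) from rfl]
  rw [stepLemma hsp hsbm (Finsupp.single 0 1) (us.map (Shn 1)) (-(us.length : ℤ))
    (((-1 : ℤ) ^ us.length) • (us.map (ExteriorAlgebra.ι ℤ)).prod)
    (by rw [List.length_map]) (fun c' => lemA hsp hsbm us c') (k - us.length)]
  rw [Tsh_single_zero]
  simp only [map_zero, zero_mul, ite_self, sub_zero]
  have hk : k - (us.length : ℤ) - -(us.length : ℤ) = k := by ring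
  rw [hk]
  by_cases h : 0 ≤ k
  · rw [if_pos h, if_pos h, Shn_single, Nat.zero_add]
    rw [show ExteriorAlgebra.ι ℤ (Finsupp.single k.toNat 1 : M₀) = b k.toNat from rfl]
    rw [mul_smul_comm, neg_one_pow_smul_neg_one_pow_smul]
  · rw [if_neg h, if_neg h, smul_zero]

end Main2

/--
for every `r ≥ 1` and every `m ∈ ⋀^r M₀`, the identity
`σ₊(z)b₀ ∧ m = (-1)^r z^r σ₊(z) σ̄₋(z) (b₀ ∧ σ̄_r m)` holds in `⋀^{r+1} M₀`, coefficient by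
coefficient (coefficient of `z^k`, `k ∈ ℤ`).  On the left, `σ₊(z)b₀ = Σ_k b_k z^k`; on the
right, the coefficient of `z^k` of `σ₊(z)σ̄₋(z)x` is `Σ_{i-j=k} σᵢ(sbmⱼ x)` (a finite sum,
expressed as `finsum`), and `σ̄_r m = (-1)^r • sbp r m`.
-/
theorem sigmaPlus_b0_wedge
    (r : ℕ) (hr : 1 ≤ r) (m : ExtM₀) (hm : m ∈ ⋀[ℤ]^r M₀)
    (sp : ℕ → Module.End ℤ ExtM₀) (hsp : IsSigmaPlus sp)
    (sbp : ℕ → Module.End ℤ ExtM₀) (hsbp : IsSigmaBarPlus sbp)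
    (sbm : ℕ → Module.End ℤ ExtM₀) (hsbm : IsSigmaBarMinus sbm) :
    ∀ k : ℤ,
      (if 0 ≤ k then b k.toNat * m else 0) =
        ((-1 : ℤ) ^ r) •
          ∑ᶠ (i : ℕ) (j : ℕ),
            (if (i : ℤ) - (j : ℤ) = k - (r : ℤ) then
              sp i (sbm j (b 0 * (((-1 : ℤ) ^ r) • sbp r m)))
            else 0) := by
  intro k
  rw [finsum_bridge]
  rw [← ExteriorAlgebra.ιMulti_span_fixedDegree] at hm
  induction hm using Submodule.span_induction with
  | mem x hx =>
    obtain ⟨v, rfl⟩ := hx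
    rw [ExteriorAlgebra.ιMulti_apply]
    have hof : (List.ofFn fun i : Fin r => ExteriorAlgebra.ι ℤ (v i)) =
        (List.ofFn v).map (ExteriorAlgebra.ι ℤ) := by
      rw [List.map_ofFn]; rfl
    rw [hof]
    have h := mainProd (sp := sp) (sbp := sbp) (sbm := sbm) hsp hsbp hsbm k (List.ofFn v)
    rwa [List.length_ofFn] at h
  | zero => simp [Hco_zero]
  | add x y hx hy px py =>
    have hx2 : b 0 * ((-1 : ℤ) ^ r • sbp r (x + y)) =
        b 0 * ((-1 : ℤ) ^ r • sbp r x) + b 0 * ((-1 : ℤ) ^ r • sbp r y) := by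
      rw [map_add, smul_add, mul_add]
    rw [hx2, Hco_add hsbm, smul_add, ← px, ← py]
    split_ifs with h
    · rw [mul_add]
    · rw [add_zero]
  | smul a x hx px =>
    have hx2 : b 0 * ((-1 : ℤ) ^ r • sbp r (a • x)) =
        a • (b 0 * ((-1 : ℤ) ^ r • sbp r x)) := by
      rw [map_smul, smul_comm, mul_smul_comm]
    rw [hx2, Hco_smul hsbm, smul_comm, ← px]
    split_ifs with h
    · rw [mul_smul_comm]
    · rw [smul_zero]
end

section
/- For every r ≥ 1 and every m ∈ ⋀^r M₀, the equality (z^{−1} σ₋(z)^T β₀) ⌟ m = (−1)^{r−1} z^{−r} σ̄₊(z) σ̄_{−r+1}(β₀ ⌟ σ₋(z)m) holds in ⋀^{r−1}M₀ (as an identity of coefficients of the two Laurent expansions). Here σ₋(z)^T β₀ = Σ_{j≥0} β_j z^{−j}, so the left-hand side is Σ_{j≥0} (β_j ⌟ m) z^{−j−1}. -/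
open ExteriorAlgebra

namespace SMT8

noncomputable abbrev L : Type := AddMonoidAlgebra ExtM₀ ℤ

noncomputable instance : CoeFun L (fun _ => ℤ → ExtM₀) := ⟨fun p => p.coeff⟩

noncomputable def sg (c : ℤ) (x : ExtM₀) : L := AddMonoidAlgebra.single c x

lemma sg_mul_sg (c d : ℤ) (x y : ExtM₀) : sg c x * sg d y = sg (c + d) (x * y) :=
  AddMonoidAlgebra.single_mul_single ..

lemma sg_apply (c : ℤ) (x : ExtM₀) (n : ℤ) : (sg c x) n = if c = n then x else 0 :=
  Finsupp.single_apply

lemma sg_def (c : ℤ) (x : ExtM₀) : sg c x = AddMonoidAlgebra.ofCoeff (Finsupp.single c x) := rfl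

lemma sg_sum {ι : Type*} (s : Finset ι) (c : ℤ) (f : ι → ExtM₀) :
    sg c (∑ i ∈ s, f i) = ∑ i ∈ s, sg c (f i) := by
  exact map_sum (AddMonoidAlgebra.singleAddHom c) f s

lemma sg_neg (c : ℤ) (x : ExtM₀) : sg c (-x) = -sg c x := AddMonoidAlgebra.single_neg c x

lemma sg_zero (c : ℤ) : sg c (0 : ExtM₀) = 0 := AddMonoidAlgebra.single_zero c

lemma sg_add (c : ℤ) (x y : ExtM₀) : sg c (x + y) = sg c x + sg c y := AddMonoidAlgebra.single_add c x y

lemma sg_sub (c : ℤ) (x y : ExtM₀) : sg c (x - y) = sg c x - sg c y := AddMonoidAlgebra.single_sub c x y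

lemma sg_smul (c : ℤ) (t : ℤ) (x : ExtM₀) : sg c (t • x) = t • sg c x :=
  (AddMonoidAlgebra.smul_single t c x).symm

lemma one_eq_sg : (1 : L) = sg 0 1 := AddMonoidAlgebra.one_def

lemma mul_sg_apply (f : L) (x : ExtM₀) (c y : ℤ) : (f * sg c x) y = f (y - c) * x :=
  AddMonoidAlgebra.coeff_mul_single_apply f x c y

lemma sg_mul_apply (x : ExtM₀) (c : ℤ) (f : L) (y : ℤ) : (sg c x * f) y = x * f (-c + y) :=
  AddMonoidAlgebra.coeff_single_mul_apply f x c y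

/-- products of basis vectors -/
noncomputable def Bl (l : List ℕ) : ExtM₀ := (l.map b).prod

@[simp] lemma Bl_nil : Bl [] = 1 := rfl

lemma Bl_cons (a : ℕ) (l : List ℕ) : Bl (a :: l) = b a * Bl l := by
  simp [Bl]

/-- the span of products of `d` basis vectors -/
noncomputable def Wd (d : ℕ) : Submodule ℤ ExtM₀ :=
  Submodule.span ℤ {x | ∃ as : List ℕ, as.length = d ∧ x = Bl as}

lemma Bl_mem (l : List ℕ) : Bl l ∈ Wd l.length :=
  Submodule.subset_span ⟨l, rfl, rfl⟩

lemma contract_ι_mul (β : Module.Dual ℤ M₀) (v : M₀) (y : ExtM₀) :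
    contract β (ι ℤ v * y) = β v • y - ι ℤ v * contract β y :=
  CliffordAlgebra.contractLeft_ι_mul (Q := (0 : QuadraticForm ℤ M₀)) β v y

lemma contract_one (β : Module.Dual ℤ M₀) : contract β 1 = 0 := by
  simp [contract]

lemma contract_zero (β : Module.Dual ℤ M₀) : contract β 0 = 0 := by
  simp [contract]

lemma contract_add (β : Module.Dual ℤ M₀) (x y : ExtM₀) :
    contract β (x + y) = contract β x + contract β y := by
  simp [contract]

lemma contract_smul (β : Module.Dual ℤ M₀) (t : ℤ) (x : ExtM₀) :
    contract β (t • x) = t • contract β x :=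
  map_smul (CliffordAlgebra.contractLeft β) t x

lemma beta_single (n a : ℕ) : beta n (Finsupp.single a 1) = if a = n then 1 else 0 := by
  simp [beta, Finsupp.single_apply]

lemma contract_b_mul (n a : ℕ) (y : ExtM₀) :
    contract (beta n) (b a * y) = (if a = n then y else 0) - b a * contract (beta n) y := by
  rw [b, contract_ι_mul, beta_single]
  split <;> simp

lemma b_mul_b_swap (a c : ℕ) : b a * b c = -(b c * b a) := by
  rw [eq_neg_iff_add_eq_zero, add_comm]
  exact ι_add_mul_swap _ _

@[simp] lemma b0_sq : b 0 * b 0 = 0 := ι_sq_zero _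

lemma contract_b_vanish (n : ℕ) (as : List ℕ) (h : ∀ a ∈ as, a ≠ n) :
    contract (beta n) (Bl as) = 0 := by
  induction as with
  | nil => simpa using contract_one (beta n)
  | cons a as ih =>
    rw [Bl_cons, contract_b_mul, if_neg (h a (by simp)), ih (fun x hx => h x (by simp [hx])),
      mul_zero, sub_zero]

lemma iota_eq_sum (v : M₀) : ι ℤ v = ∑ a ∈ v.support, v a • b a := by
  conv_lhs => rw [← Finsupp.sum_single v, Finsupp.sum, map_sum]
  refine Finset.sum_congr rfl fun a _ => ?_
  rw [b, ← map_smul]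
  congr 1
  rw [Finsupp.smul_single, smul_eq_mul, mul_one]

lemma b_mul_Wd {d : ℕ} {x : ExtM₀} (a : ℕ) (hx : x ∈ Wd d) : b a * x ∈ Wd (d + 1) := by
  induction hx using Submodule.span_induction with
  | mem y hy =>
    obtain ⟨as, hlen, rfl⟩ := hy
    rw [← Bl_cons]
    have : (a :: as).length = d + 1 := by simp [hlen]
    exact this ▸ Bl_mem (a :: as)
  | zero => rw [mul_zero]; exact Submodule.zero_mem _
  | add y z _ _ hy hz => rw [mul_add]; exact Submodule.add_mem _ hy hz
  | smul t y _ hy => rw [mul_smul_comm]; exact Submodule.smul_mem _ t hy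

lemma iota_mul_Wd {d : ℕ} {x : ExtM₀} (v : M₀) (hx : x ∈ Wd d) : ι ℤ v * x ∈ Wd (d + 1) := by
  rw [iota_eq_sum, Finset.sum_mul]
  refine Submodule.sum_mem _ fun a _ => ?_
  rw [smul_mul_assoc]
  exact Submodule.smul_mem _ _ (b_mul_Wd a hx)

lemma listprod_mem (vs : List M₀) : (vs.map (ι ℤ)).prod ∈ Wd vs.length := by
  induction vs with
  | nil => exact Bl_mem []
  | cons v vs ih =>
    rw [List.map_cons, List.prod_cons]
    exact iota_mul_Wd v ih

lemma exterior_le_Wd {r : ℕ} {m : ExtM₀} (hm : m ∈ ⋀[ℤ]^r M₀) : m ∈ Wd r := by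
  rw [← ιMulti_span_fixedDegree] at hm
  refine Submodule.span_le.mpr ?_ hm
  rintro _ ⟨v, rfl⟩
  rw [ιMulti_apply]
  have h1 : (List.ofFn fun i => ι ℤ (v i)) = (List.ofFn v).map (ι ℤ) := by
    rw [List.map_ofFn]; rfl
  rw [h1]
  have := listprod_mem (List.ofFn v)
  simpa using this

lemma contract_Bl_mem (β : Module.Dual ℤ M₀) (as : List ℕ) :
    contract β (Bl as) ∈ Wd (as.length - 1) := by
  induction as with
  | nil => simpa [contract_one] using Submodule.zero_mem (Wd 0)
  | cons a as ih =>
    rw [Bl_cons, b, contract_ι_mul, ← b]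
    refine Submodule.sub_mem _ (Submodule.smul_mem _ _ ?_) ?_
    · simpa using Bl_mem as
    · match as with
      | [] => simpa [contract_one] using Submodule.zero_mem (Wd 0)
      | a' :: as' =>
        have := b_mul_Wd a ih
        simpa using this

lemma contract_Wd {d : ℕ} {x : ExtM₀} (β : Module.Dual ℤ M₀) (hx : x ∈ Wd (d + 1)) :
    contract β x ∈ Wd d := by
  induction hx using Submodule.span_induction with
  | mem y hy =>
    obtain ⟨as, hlen, rfl⟩ := hy
    have := contract_Bl_mem β as
    rwa [hlen, Nat.add_sub_cancel] at this
  | zero => rw [contract_zero]; exact Submodule.zero_mem _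
  | add y z _ _ hy hz => rw [contract_add]; exact Submodule.add_mem _ hy hz
  | smul t y _ hy => rw [contract_smul]; exact Submodule.smul_mem _ t hy

end SMT8

namespace SMT8

open Finset

/-- generic finiteness for HS families that vanish eventually on basis vectors -/
lemma hsfin {D : ℕ → Module.End ℤ ExtM₀} (hD : IsHSFamily D)
    (hb : ∀ j : ℕ, ∃ N, ∀ i, N ≤ i → D i (b j) = 0) :
    ∀ x : ExtM₀, ∃ N, ∀ i, N ≤ i → D i x = 0 := by
  choose Nb hNb using hb
  intro x
  induction x using CliffordAlgebra.induction with
  | algebraMap r =>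
    refine ⟨1, fun i hi => ?_⟩
    rw [Algebra.algebraMap_eq_smul_one, map_smul, hD.2 i, if_neg (by omega), smul_zero]
  | ι v =>
    refine ⟨v.support.sup Nb, fun i hi => ?_⟩
    rw [iota_eq_sum, map_sum]
    refine Finset.sum_eq_zero fun a ha => ?_
    rw [map_smul, hNb a i (le_trans (Finset.le_sup ha) hi), smul_zero]
  | mul x y hx hy =>
    obtain ⟨Nx, hx⟩ := hx; obtain ⟨Ny, hy⟩ := hy
    refine ⟨Nx + Ny, fun i hi => ?_⟩
    rw [hD.1]
    refine Finset.sum_eq_zero fun p hp => ?_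
    rw [Finset.HasAntidiagonal.mem_antidiagonal] at hp
    rcases le_or_gt Nx p.1 with h | h
    · rw [hx _ h, zero_mul]
    · rw [hy p.2 (by omega), mul_zero]
  | add x y hx hy =>
    obtain ⟨Nx, hx⟩ := hx; obtain ⟨Ny, hy⟩ := hy
    refine ⟨max Nx Ny, fun i hi => ?_⟩
    rw [map_add, hx i (le_trans (le_max_left _ _) hi), hy i (le_trans (le_max_right _ _) hi),
      add_zero]

/-- the generating series of an HS family, with exponent direction `ε` -/
noncomputable def ser (D : ℕ → Module.End ℤ ExtM₀) (ε : ℤ) (x : ExtM₀) : L :=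
  ∑ᶠ i : ℕ, sg (ε * i) (D i x)

lemma ser_eq_sum (D : ℕ → Module.End ℤ ExtM₀) (ε : ℤ) (x : ExtM₀) {N : ℕ}
    (hN : ∀ i, N ≤ i → D i x = 0) :
    ser D ε x = ∑ i ∈ Finset.range N, sg (ε * i) (D i x) := by
  refine finsum_eq_finset_sum_of_support_subset _ fun i hi => ?_
  simp only [Finset.coe_range, Set.mem_Iio]
  by_contra h
  push_neg at h
  exact hi (show sg (ε * (i:ℤ)) (D i x) = 0 by rw [hN i h, sg_zero])

lemma ser_zero (D : ℕ → Module.End ℤ ExtM₀) (ε : ℤ) : ser D ε 0 = 0 := by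
  rw [ser]
  have : ∀ i : ℕ, sg (ε * i) (D i 0) = 0 := fun i => by rw [map_zero, sg_zero]
  rw [finsum_congr this, finsum_zero]

lemma ser_one {D : ℕ → Module.End ℤ ExtM₀} (hD : IsHSFamily D) (ε : ℤ) : ser D ε 1 = 1 := by
  rw [ser_eq_sum D ε 1 (N := 1) (fun i hi => by rw [hD.2, if_neg (by omega)]),
    Finset.sum_range_one, hD.2, if_pos rfl]
  norm_num
  exact one_eq_sg.symm

lemma ser_add {D : ℕ → Module.End ℤ ExtM₀}
    (hfin : ∀ x : ExtM₀, ∃ N, ∀ i, N ≤ i → D i x = 0) (ε : ℤ) (x y : ExtM₀) :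
    ser D ε (x + y) = ser D ε x + ser D ε y := by
  obtain ⟨Nx, hx⟩ := hfin x; obtain ⟨Ny, hy⟩ := hfin y
  have hx' : ∀ i, max Nx Ny ≤ i → D i x = 0 := fun i hi => hx i (le_trans (le_max_left _ _) hi)
  have hy' : ∀ i, max Nx Ny ≤ i → D i y = 0 := fun i hi => hy i (le_trans (le_max_right _ _) hi)
  have hxy : ∀ i, max Nx Ny ≤ i → D i (x + y) = 0 := fun i hi => by
    rw [map_add, hx' i hi, hy' i hi, add_zero]
  rw [ser_eq_sum D ε _ hxy, ser_eq_sum D ε _ hx', ser_eq_sum D ε _ hy',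
    ← Finset.sum_add_distrib]
  refine Finset.sum_congr rfl fun i _ => ?_
  rw [map_add, sg_add]

/-- the convolution-square helper -/
lemma sum_antidiag_square {β : Type*} [AddCommMonoid β] (N : ℕ) (h : ℕ → ℕ → β)
    (hv : ∀ p q, N ≤ p ∨ N ≤ q → h p q = 0) :
    ∑ n ∈ Finset.range (2 * N), ∑ pq ∈ Finset.HasAntidiagonal.antidiagonal n, h pq.1 pq.2
      = ∑ i ∈ Finset.range N, ∑ j ∈ Finset.range N, h i j := by
  classical
  rw [← Finset.sum_sigma (Finset.range (2*N)) (fun n => Finset.HasAntidiagonal.antidiagonal n)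
    (fun x => h x.2.1 x.2.2)]
  rw [← Finset.sum_product' (s := Finset.range N) (t := Finset.range N) (f := h)]
  have step1 : ∑ x ∈ (Finset.range (2*N)).sigma (fun n => Finset.HasAntidiagonal.antidiagonal n),
      h x.2.1 x.2.2
      = ∑ pq ∈ (Finset.range (2*N) ×ˢ Finset.range (2*N)).filter
          (fun pq => pq.1 + pq.2 < 2*N), h pq.1 pq.2 := by
    refine Finset.sum_nbij' (i := fun x => x.2) (j := fun pq => ⟨pq.1 + pq.2, pq⟩)
      ?_ ?_ ?_ ?_ ?_
    · rintro ⟨n, pq⟩ hx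
      simp only [Finset.mem_sigma, Finset.mem_range, Finset.HasAntidiagonal.mem_antidiagonal] at hx
      simp only [Finset.mem_filter, Finset.mem_product, Finset.mem_range]
      omega
    · rintro pq hpq
      simp only [Finset.mem_filter, Finset.mem_product, Finset.mem_range] at hpq
      simp only [Finset.mem_sigma, Finset.mem_range, Finset.HasAntidiagonal.mem_antidiagonal]
      exact ⟨hpq.2, trivial⟩
    · rintro ⟨n, pq⟩ hx
      simp only [Finset.mem_sigma, Finset.mem_range, Finset.HasAntidiagonal.mem_antidiagonal] at hx
      simp only [Sigma.mk.inj_iff, heq_eq_eq]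
      exact ⟨hx.2, trivial⟩
    · rintro pq _; rfl
    · rintro x _; rfl
  rw [step1]
  rw [Finset.sum_filter_of_ne (by
    intro pq hpq hne
    by_contra hlt
    push_neg at hlt
    simp only [Finset.mem_product, Finset.mem_range] at hpq
    exact hne (hv pq.1 pq.2 (by omega)))]
  symm
  refine Finset.sum_subset ?_ ?_
  · refine fun pq hpq => ?_
    simp only [Finset.mem_product, Finset.mem_range] at hpq ⊢
    omega
  · intro pq hpq hnot
    simp only [Finset.mem_product, Finset.mem_range] at hpq hnot
    exact hv pq.1 pq.2 (by omega)

lemma ser_mul {D : ℕ → Module.End ℤ ExtM₀} (hD : IsHSFamily D)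
    (hfin : ∀ x : ExtM₀, ∃ N, ∀ i, N ≤ i → D i x = 0) (ε : ℤ) (x y : ExtM₀) :
    ser D ε (x * y) = ser D ε x * ser D ε y := by
  obtain ⟨Nx, hx⟩ := hfin x; obtain ⟨Ny, hy⟩ := hfin y
  set N := max Nx Ny with hNdef
  have hx' : ∀ i, N ≤ i → D i x = 0 := fun i hi => hx i (le_trans (le_max_left _ _) hi)
  have hy' : ∀ i, N ≤ i → D i y = 0 := fun i hi => hy i (le_trans (le_max_right _ _) hi)
  have hxy : ∀ i, 2 * N ≤ i → D i (x * y) = 0 := fun i hi => by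
    rw [hD.1]
    refine Finset.sum_eq_zero fun p hp => ?_
    rw [Finset.HasAntidiagonal.mem_antidiagonal] at hp
    rcases le_or_gt N p.1 with h | h
    · rw [hx' _ h, zero_mul]
    · rw [hy' p.2 (by omega), mul_zero]
  rw [ser_eq_sum D ε _ hxy, ser_eq_sum D ε _ hx', ser_eq_sum D ε _ hy',
    Finset.sum_mul_sum]
  have key : ∀ n : ℕ, sg (ε * n) (D n (x * y))
      = ∑ pq ∈ Finset.HasAntidiagonal.antidiagonal n, sg (ε * pq.1) (D pq.1 x) * sg (ε * pq.2) (D pq.2 y) := by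
    intro n
    rw [hD.1, sg_sum]
    refine Finset.sum_congr rfl fun pq hpq => ?_
    rw [Finset.HasAntidiagonal.mem_antidiagonal] at hpq
    rw [sg_mul_sg]
    congr 1
    rw [← hpq]
    push_cast
    ring
  rw [Finset.sum_congr rfl fun n _ => key n]
  refine sum_antidiag_square N (fun p q => sg (ε * p) (D p x) * sg (ε * q) (D q y))
    (fun p q hpq => ?_)
  show sg (ε * p) (D p x) * sg (ε * q) (D q y) = 0
  rcases hpq with h | h
  · rw [hx' p h, sg_zero, zero_mul]
  · rw [hy' q h, sg_zero, mul_zero]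

lemma ser_apply_pos {D : ℕ → Module.End ℤ ExtM₀}
    (hfin : ∀ x : ExtM₀, ∃ N, ∀ i, N ≤ i → D i x = 0) (x : ExtM₀) (c : ℤ) :
    ser D 1 x c = if 0 ≤ c then D c.toNat x else 0 := by
  obtain ⟨N, hN⟩ := hfin x
  rw [ser_eq_sum D 1 x hN, AddMonoidAlgebra.coeff_sum, Finset.sum_apply']
  have hterm : ∀ i : ℕ, (sg (1 * i) (D i x)) c = if (i : ℤ) = c then D i x else 0 := by
    intro i; rw [sg_apply, one_mul]
  rw [Finset.sum_congr rfl fun i _ => hterm i]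
  by_cases hc : 0 ≤ c
  · rw [if_pos hc]
    have : ∀ i ∈ Finset.range N, (if (i : ℤ) = c then D i x else 0)
        = if i = c.toNat then D i x else 0 := by
      intro i _
      refine if_congr ?_ rfl rfl
      omega
    rw [Finset.sum_congr rfl this, Finset.sum_ite_eq' (Finset.range N) c.toNat]
    by_cases hcN : c.toNat ∈ Finset.range N
    · rw [if_pos hcN]
    · rw [if_neg hcN, hN c.toNat (by simpa [Finset.mem_range, not_lt] using hcN)]
  · rw [if_neg hc]
    refine Finset.sum_eq_zero fun i _ => if_neg (by omega)

lemma ser_apply_neg {D : ℕ → Module.End ℤ ExtM₀}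
    (hfin : ∀ x : ExtM₀, ∃ N, ∀ i, N ≤ i → D i x = 0) (x : ExtM₀) (c : ℤ) :
    ser D (-1) x c = if c ≤ 0 then D (-c).toNat x else 0 := by
  obtain ⟨N, hN⟩ := hfin x
  rw [ser_eq_sum D (-1) x hN, AddMonoidAlgebra.coeff_sum, Finset.sum_apply']
  have hterm : ∀ i : ℕ, (sg ((-1) * i) (D i x)) c = if -(i : ℤ) = c then D i x else 0 := by
    intro i; rw [sg_apply, neg_one_mul]
  rw [Finset.sum_congr rfl fun i _ => hterm i]
  by_cases hc : c ≤ 0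
  · rw [if_pos hc]
    have : ∀ i ∈ Finset.range N, (if -(i : ℤ) = c then D i x else 0)
        = if i = (-c).toNat then D i x else 0 := by
      intro i _
      refine if_congr ?_ rfl rfl
      omega
    rw [Finset.sum_congr rfl this, Finset.sum_ite_eq' (Finset.range N) (-c).toNat]
    by_cases hcN : (-c).toNat ∈ Finset.range N
    · rw [if_pos hcN]
    · rw [if_neg hcN, hN (-c).toNat (by simpa [Finset.mem_range, not_lt] using hcN)]
  · rw [if_neg hc]
    refine Finset.sum_eq_zero fun i _ => if_neg (by omega)

end SMT8

namespace SMT8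

open Finset

/-- the index-lowering module map `single a 1 ↦ single (a-1) 1`, `single 0 1 ↦ 0` -/
noncomputable def ΦM : M₀ →ₗ[ℤ] M₀ :=
  Finsupp.lsum ℤ (fun a => if a = 0 then (0 : ℤ →ₗ[ℤ] M₀) else Finsupp.lsingle (a - 1))

/-- the index-lowering algebra map on the exterior algebra -/
noncomputable def Φ : ExtM₀ →ₐ[ℤ] ExtM₀ :=
  ExteriorAlgebra.lift ℤ ⟨(ι ℤ).comp ΦM, fun m => ι_sq_zero (ΦM m)⟩

lemma Φ_ι (v : M₀) : Φ (ι ℤ v) = ι ℤ (ΦM v) := by simp [Φ]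

lemma Φ_b (a : ℕ) : Φ (b a) = if a = 0 then 0 else b (a - 1) := by
  rw [b, Φ_ι, ΦM]
  simp only [Finsupp.lsum_single]
  split
  · simp
  · simp [b]

section D

variable {sm sbp sbm : ℕ → Module.End ℤ ExtM₀}

lemma sm_fin (hsm : IsSigmaMinus sm) : ∀ x : ExtM₀, ∃ N, ∀ i, N ≤ i → sm i x = 0 :=
  hsfin hsm.1 (fun j => ⟨j + 1, fun i hi => by rw [hsm.2, if_neg (by omega)]⟩)

lemma sbp_fin (hsbp : IsSigmaBarPlus sbp) : ∀ x : ExtM₀, ∃ N, ∀ i, N ≤ i → sbp i x = 0 :=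
  hsfin hsbp.1 (fun j => ⟨2, fun i hi => hsbp.2.2.2 i j hi⟩)

lemma sbm_fin (hsbm : IsSigmaBarMinus sbm) : ∀ x : ExtM₀, ∃ N, ∀ i, N ≤ i → sbm i x = 0 :=
  hsfin hsbm.1 (fun j => ⟨2, fun i hi => hsbm.2.2.2 i j hi⟩)

lemma sbm_one_b (hsbm : IsSigmaBarMinus sbm) (a : ℕ) : sbm 1 (b a) = -Φ (b a) := by
  rw [hsbm.2.2.1, Φ_b]
  rcases Nat.eq_zero_or_pos a with h | h
  · subst h; simp
  · rw [if_pos (by omega), if_neg (by omega)]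

lemma sbm_vanish (hsbm : IsSigmaBarMinus sbm) (as : List ℕ) :
    ∀ p, as.length < p → sbm p (Bl as) = 0 := by
  induction as with
  | nil =>
    intro p hp
    simpa using (by rw [hsbm.1.2 p, if_neg (by omega)] :
      sbm p (1 : ExtM₀) = 0)
  | cons a as ih =>
    intro p hp
    rw [Bl_cons, hsbm.1.1, Finset.Nat.sum_antidiagonal_eq_sum_range_succ_mk]
    refine Finset.sum_eq_zero fun k _ => ?_
    show sbm k (b a) * sbm (p - k) (Bl as) = 0
    rcases k with _ | _ | k
    · rw [Nat.sub_zero, ih p (by simp at hp; omega), mul_zero]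
    · rw [ih (p - 1) (by simp at hp; omega), mul_zero]
    · rw [hsbm.2.2.2 (k + 2) a (by omega), zero_mul]

lemma sbm_top (hsbm : IsSigmaBarMinus sbm) (as : List ℕ) :
    sbm as.length (Bl as) = ((-1 : ℤ) ^ as.length) • Φ (Bl as) := by
  induction as with
  | nil =>
    simp only [List.length_nil, Bl_nil, pow_zero, one_smul, map_one]
    rw [hsbm.1.2 0, if_pos rfl]
  | cons a as ih =>
    rw [Bl_cons, hsbm.1.1, Finset.Nat.sum_antidiagonal_eq_sum_range_succ_mk]
    have hlen : (a :: as).length = as.length + 1 := by simp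
    rw [hlen]
    rw [Finset.sum_range_succ' _ (as.length + 1), Finset.sum_range_succ' _ as.length]
    have h2 : ∀ k ∈ Finset.range as.length,
        sbm (k + 1 + 1) (b a) * sbm (as.length + 1 - (k + 1 + 1)) (Bl as) = 0 := by
      intro k _
      rw [hsbm.2.2.2 (k + 1 + 1) a (by omega), zero_mul]
    rw [Finset.sum_congr rfl h2, Finset.sum_const_zero, zero_add]
    have h0 : sbm 0 (b a) * sbm (as.length + 1 - 0) (Bl as) = 0 := by
      rw [sbm_vanish hsbm as (as.length + 1 - 0) (by omega), mul_zero]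
    rw [h0, add_zero]
    have h1 : as.length + 1 - (0 + 1) = as.length := by omega
    rw [h1, sbm_one_b hsbm, ih, map_mul]
    rw [neg_mul, mul_smul_comm, pow_succ, mul_comm ((-1:ℤ)^as.length) (-1), mul_smul,
      neg_one_zsmul]

lemma sbm_Wd (hsbm : IsSigmaBarMinus sbm) {d : ℕ} {x : ExtM₀} (hx : x ∈ Wd d) :
    sbm d x = ((-1 : ℤ) ^ d) • Φ x := by
  induction hx using Submodule.span_induction with
  | mem y hy =>
    obtain ⟨as, hlen, rfl⟩ := hy
    rw [← hlen]
    exact sbm_top hsbm as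
  | zero => rw [map_zero, map_zero, smul_zero]
  | add y z _ _ hy hz => rw [map_add, map_add, hy, hz, smul_add]
  | smul t y _ hy => rw [map_smul, map_smul, hy, smul_comm]

lemma key_inner (hsbm : IsSigmaBarMinus sbm) {d : ℕ} {x : ExtM₀} (hx : x ∈ Wd d) :
    ((-1 : ℤ) ^ d) • sbm d x = Φ x := by
  rw [sbm_Wd hsbm hx, smul_smul, ← pow_add, Even.neg_one_pow ⟨d, by omega⟩, one_smul]

end D

/-- the coefficientwise extension of `Φ` to Laurent series -/
noncomputable def ΦL (p : L) : L := AddMonoidAlgebra.ofCoeff (Finsupp.mapRange ⇑Φ (map_zero Φ) p.coeff)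

lemma ΦL_apply (p : L) (c : ℤ) : ΦL p c = Φ (p c) := Finsupp.mapRange_apply (hf := map_zero Φ)

lemma ΦL_sg (c : ℤ) (x : ExtM₀) : ΦL (sg c x) = sg c (Φ x) :=
  congrArg AddMonoidAlgebra.ofCoeff Finsupp.mapRange_single

lemma ΦL_zero : ΦL 0 = 0 := congrArg AddMonoidAlgebra.ofCoeff Finsupp.mapRange_zero

lemma ΦL_add (p q : L) : ΦL (p + q) = ΦL p + ΦL q := congrArg AddMonoidAlgebra.ofCoeff (Finsupp.mapRange_add (map_add Φ) p.coeff q.coeff)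

/-- `ΦL` as an additive monoid hom -/
noncomputable def ΦLh : L →+ L := ⟨⟨ΦL, ΦL_zero⟩, ΦL_add⟩

lemma ΦL_mul (p q : L) : ΦL (p * q) = ΦL p * ΦL q := by
  induction p using AddMonoidAlgebra.induction_linear with
  | zero => rw [zero_mul, ΦL_zero, zero_mul]
  | add f g hf hg => rw [add_mul, ΦL_add, hf, hg, ΦL_add, add_mul]
  | single c x =>
    induction q using AddMonoidAlgebra.induction_linear with
    | zero => rw [mul_zero, ΦL_zero, mul_zero]
    | add f g hf hg => rw [mul_add, ΦL_add, hf, hg, ΦL_add, mul_add]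
    | single d y =>
      show ΦL (sg c x * sg d y) = ΦL (sg c x) * ΦL (sg d y)
      rw [sg_mul_sg, ΦL_sg, ΦL_sg, ΦL_sg, sg_mul_sg, map_mul]

/-- the coefficientwise extension of contraction against `β₀` -/
noncomputable def ctrL (p : L) : L :=
  AddMonoidAlgebra.ofCoeff (Finsupp.mapRange (contract (beta 0)) (contract_zero _) p.coeff)

lemma ctrL_apply (p : L) (c : ℤ) : ctrL p c = contract (beta 0) (p c) := Finsupp.mapRange_apply (hf := contract_zero _)

lemma ctrL_sg (c : ℤ) (x : ExtM₀) : ctrL (sg c x) = sg c (contract (beta 0) x) :=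
  congrArg AddMonoidAlgebra.ofCoeff Finsupp.mapRange_single

lemma ctrL_zero : ctrL 0 = 0 := congrArg AddMonoidAlgebra.ofCoeff Finsupp.mapRange_zero

lemma ctrL_add (p q : L) : ctrL (p + q) = ctrL p + ctrL q :=
  congrArg AddMonoidAlgebra.ofCoeff (Finsupp.mapRange_add (contract_add _) p.coeff q.coeff)

/-- `ctrL` as an additive monoid hom -/
noncomputable def ctrLh : L →+ L := ⟨⟨ctrL, ctrL_zero⟩, ctrL_add⟩

lemma ctrL_sg_ι_mul (v : M₀) (c : ℤ) (p : L) :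
    ctrL (sg c (ι ℤ v) * p) = beta 0 v • (sg c 1 * p) - sg c (ι ℤ v) * ctrL p := by
  induction p using AddMonoidAlgebra.induction_linear with
  | zero => rw [mul_zero, ctrL_zero, mul_zero, mul_zero, smul_zero, sub_zero]
  | add f g hf hg =>
    rw [mul_add, ctrL_add, hf, hg, ctrL_add, mul_add, mul_add, smul_add, sub_add_sub_comm]
  | single d y =>
    show ctrL (sg c (ι ℤ v) * sg d y)
      = beta 0 v • (sg c 1 * sg d y) - sg c (ι ℤ v) * ctrL (sg d y)
    rw [sg_mul_sg, ctrL_sg, contract_ι_mul, sg_sub, ctrL_sg, sg_mul_sg, sg_mul_sg, one_mul,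
      sg_smul]

lemma sg_one_central (c : ℤ) (p : L) : p * sg c 1 = sg c 1 * p := by
  induction p using AddMonoidAlgebra.induction_linear with
  | zero => rw [zero_mul, mul_zero]
  | add f g hf hg => rw [add_mul, hf, hg, mul_add]
  | single d y =>
    show sg d y * sg c 1 = sg c 1 * sg d y
    rw [sg_mul_sg, sg_mul_sg, mul_one, one_mul, add_comm]

section Theta

variable (sbp : ℕ → Module.End ℤ ExtM₀)

/-- apply `σ̄₊(z)` coefficientwise and resum (with `z = T 1`) -/
noncomputable def Θ (p : L) : L := p.coeff.sum (fun c x => ser sbp 1 x * sg c 1)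

variable {sbp}

lemma Θ_sg (hsbp : IsSigmaBarPlus sbp) (c : ℤ) (x : ExtM₀) :
    Θ sbp (sg c x) = ser sbp 1 x * sg c 1 := by
  refine Finsupp.sum_single_index ?_
  rw [ser_zero, zero_mul]

lemma Θ_zero : Θ sbp 0 = 0 := Finsupp.sum_zero_index

lemma Θ_add (hsbp : IsSigmaBarPlus sbp) (p q : L) :
    Θ sbp (p + q) = Θ sbp p + Θ sbp q := by
  refine Finsupp.sum_add_index' (fun c => ?_) (fun c x y => ?_)
  · rw [ser_zero, zero_mul]
  · rw [ser_add (sbp_fin hsbp), add_mul]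

lemma Θ_mul (hsbp : IsSigmaBarPlus sbp) (p q : L) :
    Θ sbp (p * q) = Θ sbp p * Θ sbp q := by
  induction p using AddMonoidAlgebra.induction_linear with
  | zero => rw [zero_mul, Θ_zero, zero_mul]
  | add f g hf hg => rw [add_mul, Θ_add hsbp, hf, hg, Θ_add hsbp, add_mul]
  | single c x =>
    induction q using AddMonoidAlgebra.induction_linear with
    | zero => rw [mul_zero, Θ_zero, mul_zero]
    | add f g hf hg => rw [mul_add, Θ_add hsbp, hf, hg, Θ_add hsbp, mul_add]
    | single d y =>
      show Θ sbp (sg c x * sg d y) = Θ sbp (sg c x) * Θ sbp (sg d y)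
      rw [sg_mul_sg, Θ_sg hsbp, Θ_sg hsbp, Θ_sg hsbp,
        ser_mul hsbp.1 (sbp_fin hsbp)]
      have : sg (c + d) (1 : ExtM₀) = sg c 1 * sg d 1 := by rw [sg_mul_sg, one_mul]
      rw [this, mul_assoc, ← mul_assoc (ser sbp 1 y) (sg c 1) (sg d 1),
        sg_one_central c (ser sbp 1 y), mul_assoc (sg c 1) (ser sbp 1 y) (sg d 1),
        ← mul_assoc (ser sbp 1 x) (sg c 1) (ser sbp 1 y * sg d 1)]

end Theta

end SMT8

namespace SMT8

open Finset

noncomputable def F (a : ℕ) : L := ∑ i ∈ Finset.range (a + 1), sg ((i : ℤ) - a) (b i)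

noncomputable def G (a : ℕ) : L := sg (1 - (a : ℤ)) (b 0) - sg 1 (b a)

noncomputable def FL (l : List ℕ) : L := (l.map F).prod

noncomputable def Gl (l : List ℕ) : L := (l.map G).prod

@[simp] lemma FL_nil : FL [] = 1 := rfl
@[simp] lemma Gl_nil : Gl [] = 1 := rfl
lemma FL_cons (a : ℕ) (l : List ℕ) : FL (a :: l) = F a * FL l := by simp [FL]
lemma Gl_cons (a : ℕ) (l : List ℕ) : Gl (a :: l) = G a * Gl l := by simp [Gl]

section D2

variable {sm sbp sbm : ℕ → Module.End ℤ ExtM₀}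

lemma smser_b (hsm : IsSigmaMinus sm) (a : ℕ) : ser sm (-1) (b a) = F a := by
  rw [ser_eq_sum sm (-1) (b a) (N := a + 1)
    (fun i hi => by rw [hsm.2, if_neg (by omega)])]
  rw [F, ← Finset.sum_range_reflect (fun i => sg ((i : ℤ) - a) (b i)) (a + 1)]
  refine Finset.sum_congr rfl fun j hj => ?_
  rw [Finset.mem_range] at hj
  rw [hsm.2, if_pos (by omega)]
  congr 1
  omega

lemma smser_Bl (hsm : IsSigmaMinus sm) (l : List ℕ) : ser sm (-1) (Bl l) = FL l := by
  induction l with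
  | nil => rw [Bl_nil, ser_one hsm.1, FL_nil]
  | cons a l ih =>
    rw [Bl_cons, ser_mul hsm.1 (sm_fin hsm), smser_b hsm, ih, FL_cons]

lemma FL_coeff (hsm : IsSigmaMinus sm) (l : List ℕ) (j : ℕ) :
    FL l (-(j : ℤ)) = sm j (Bl l) := by
  rw [← smser_Bl hsm, ser_apply_neg (sm_fin hsm), if_pos (by omega)]
  norm_num

lemma FL_coeff_pos (hsm : IsSigmaMinus sm) (l : List ℕ) (c : ℤ) (hc : 0 < c) :
    FL l c = 0 := by
  rw [← smser_Bl hsm, ser_apply_neg (sm_fin hsm), if_neg (by omega)]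

lemma FL_coeff_mem (l : List ℕ) (c : ℤ) : FL l c ∈ Wd l.length := by
  induction l generalizing c with
  | nil =>
    show (1 : L) c ∈ Wd 0
    rw [one_eq_sg, sg_apply]
    split
    · exact Bl_mem []
    · exact Submodule.zero_mem _
  | cons a l ih =>
    rw [FL_cons, F, Finset.sum_mul, AddMonoidAlgebra.coeff_sum, Finset.sum_apply']
    refine Submodule.sum_mem _ fun i _ => ?_
    rw [sg_mul_apply]
    show b i * FL l _ ∈ Wd (l.length + 1)
    exact b_mul_Wd i (ih _)

lemma ctrL_sum {ι : Type*} (s : Finset ι) (f : ι → L) :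
    ctrL (∑ i ∈ s, f i) = ∑ i ∈ s, ctrL (f i) := map_sum ctrLh f s

lemma ΦL_sum {ι : Type*} (s : Finset ι) (f : ι → L) :
    ΦL (∑ i ∈ s, f i) = ∑ i ∈ s, ΦL (f i) := map_sum ΦLh f s

lemma Θ_sum (hsbp : IsSigmaBarPlus sbp) {ι : Type*} (s : Finset ι) (f : ι → L) :
    Θ sbp (∑ i ∈ s, f i) = ∑ i ∈ s, Θ sbp (f i) :=
  map_sum (⟨⟨Θ sbp, Θ_zero⟩, Θ_add hsbp⟩ : L →+ L) f s

lemma ctrL_F_mul (a : ℕ) (p : L) :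
    ctrL (F a * p) = sg (-(a : ℤ)) 1 * p - F a * ctrL p := by
  rw [F, Finset.sum_mul, ctrL_sum]
  have hterm : ∀ i : ℕ, ctrL (sg ((i : ℤ) - a) (b i) * p)
      = beta 0 (Finsupp.single i 1) • (sg ((i : ℤ) - a) 1 * p)
        - sg ((i : ℤ) - a) (b i) * ctrL p := fun i => ctrL_sg_ι_mul _ _ _
  rw [Finset.sum_congr rfl fun i _ => hterm i, Finset.sum_sub_distrib, ← Finset.sum_mul]
  congr 1
  have : ∀ i ∈ Finset.range (a + 1), beta 0 (Finsupp.single i 1) • (sg ((i : ℤ) - a) 1 * p)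
      = if i = 0 then sg ((i : ℤ) - a) 1 * p else 0 := by
    intro i _
    rw [beta_single]
    rcases Nat.eq_zero_or_pos i with h | h
    · subst h; rw [if_pos rfl, if_pos rfl, one_smul]
    · rw [if_neg (by omega), if_neg (by omega), zero_smul]
  rw [Finset.sum_congr rfl this, Finset.sum_ite_eq' (Finset.range (a + 1)) 0,
    if_pos (by simp)]
  norm_num

lemma serP_b (hsbp : IsSigmaBarPlus sbp) (a : ℕ) :
    ser sbp 1 (b a) = sg 0 (b a) - sg 1 (b (a + 1)) := by
  rw [ser_eq_sum sbp 1 (b a) (N := 2) (fun i hi => hsbp.2.2.2 i a hi)]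
  rw [Finset.sum_range_succ, Finset.sum_range_one, hsbp.2.1, hsbp.2.2.1, sg_neg]
  norm_num [sub_eq_add_neg]

lemma ΘΦ_sg_one (hsbp : IsSigmaBarPlus sbp) (c : ℤ) : Θ sbp (ΦL (sg c 1)) = sg c 1 := by
  rw [ΦL_sg, map_one, Θ_sg hsbp, ser_one hsbp.1, one_mul]

lemma ΘΦ_F (hsbp : IsSigmaBarPlus sbp) (a : ℕ) : Θ sbp (ΦL (F a)) = G a := by
  rw [F, ΦL_sum, Finset.sum_congr rfl fun (i : ℕ) _ => ΦL_sg ((i : ℤ) - a) (b i),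
    Θ_sum hsbp, Finset.sum_congr rfl fun (i : ℕ) _ => Θ_sg hsbp ((i : ℤ) - a) (Φ (b i))]
  rw [Finset.sum_range_succ' _ a]
  have h0 : ser sbp 1 (Φ (b 0)) * sg (((0 : ℕ) : ℤ) - a) 1 = 0 := by
    rw [Φ_b, if_pos rfl, ser_zero, zero_mul]
  have hterm : ∀ i ∈ Finset.range a, ser sbp 1 (Φ (b (i + 1))) * sg (((i : ℤ) + 1) - a) 1
      = (fun (j : ℕ) => sg ((j : ℤ) + 1 - a) (b j)) i - (fun (j : ℕ) => sg ((j : ℤ) + 1 - a) (b j)) (i + 1) := by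
    intro i _
    rw [Φ_b, if_neg (by omega), Nat.add_sub_cancel, serP_b hsbp, sub_mul, sg_mul_sg, sg_mul_sg,
      mul_one, mul_one]
    push_cast
    congr 2 <;> ring
  have hcast : ∀ i : ℕ, ((i + 1 : ℕ) : ℤ) - a = ((i : ℤ) + 1) - a := by intro i; push_cast; ring
  rw [Finset.sum_congr rfl fun i hi => (by rw [hcast i]; exact hterm i hi :
      ser sbp 1 (Φ (b (i + 1))) * sg (((i + 1 : ℕ) : ℤ) - a) 1
        = (fun (j : ℕ) => sg ((j : ℤ) + 1 - a) (b j)) i - (fun (j : ℕ) => sg ((j : ℤ) + 1 - a) (b j)) (i + 1))]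
  rw [Finset.sum_range_sub' (fun (j : ℕ) => sg ((j : ℤ) + 1 - a) (b j)) a, h0, add_zero]
  rw [G]
  congr 2 <;> push_cast <;> ring

lemma ΘΦ_FL (hsbp : IsSigmaBarPlus sbp) (l : List ℕ) : Θ sbp (ΦL (FL l)) = Gl l := by
  induction l with
  | nil =>
    show Θ sbp (ΦL 1) = 1
    rw [one_eq_sg, ΘΦ_sg_one hsbp, ← one_eq_sg]
  | cons a l ih =>
    rw [FL_cons, ΦL_mul, Θ_mul hsbp, ΘΦ_F hsbp, ih, Gl_cons]

end D2

end SMT8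

namespace SMT8

open Finset

lemma supp_fin_of_ctr (as : List ℕ) (g : ℕ → L)
    (hg : ∀ n, contract (beta n) (Bl as) = 0 → g n = 0) :
    (Function.support g).Finite := by
  refine Set.Finite.subset as.toFinset.finite_toSet fun n hn => ?_
  simp only [Function.mem_support] at hn
  by_contra h
  refine hn (hg n (contract_b_vanish n as fun x hx hxn => h ?_))
  subst hxn
  exact Finset.mem_coe.mpr (List.mem_toFinset.mpr hx)

lemma mul_finsum_L (q : L) (t : ℕ → L) (h : (Function.support t).Finite) :
    q * ∑ᶠ n, t n = ∑ᶠ n, q * t n :=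
  (AddMonoidHom.mulLeft q).map_finsum h

lemma finsum_neg_L (t : ℕ → L) : ∑ᶠ n, -t n = -∑ᶠ n, t n := by
  rcases (Set.finite_or_infinite (Function.support t)) with h | h
  · calc ∑ᶠ n, -t n = ∑ᶠ n, (-1 : ℤ) • t n := by simp
      _ = (-1 : ℤ) • ∑ᶠ n, t n := (smul_finsum' (-1 : ℤ) h).symm
      _ = -∑ᶠ n, t n := by simp
  · rw [finsum_of_infinite_support h, finsum_of_infinite_support (by
      simpa [Function.support_neg] using h), neg_zero]

/-- the auxiliary series `Σₙ (b₀ ∧ (βₙ ⌟ [as])) z^{|as|-n}` -/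
noncomputable def SB (as : List ℕ) : L :=
  ∑ᶠ n : ℕ, sg ((as.length : ℤ) - n) (b 0 * contract (beta n) (Bl as))

lemma SB_supp (as : List ℕ) (e : ℕ → ℤ) :
    (Function.support fun n => sg (e n) (b 0 * contract (beta n) (Bl as))).Finite :=
  supp_fin_of_ctr as _ (fun n hn => by rw [hn, mul_zero, sg_zero])

lemma Sl_supp (as : List ℕ) (e : ℕ → ℤ) (u : ℕ → ExtM₀) :
    (Function.support fun n => sg (e n) (u n * contract (beta n) (Bl as))).Finite :=
  supp_fin_of_ctr as _ (fun n hn => by rw [hn, mul_zero, sg_zero])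

lemma Sl_supp' (as : List ℕ) (e : ℕ → ℤ) :
    (Function.support fun n => sg (e n) (contract (beta n) (Bl as))).Finite :=
  supp_fin_of_ctr as _ (fun n hn => by rw [hn, sg_zero])

/-- Claim F: the product of the `G`-factors -/
lemma Gl_eq (as : List ℕ) :
    Gl as = ((-1 : ℤ) ^ as.length) • (sg (as.length : ℤ) (Bl as) - SB as) := by
  induction as with
  | nil =>
    have h1 : SB [] = 0 := by
      rw [SB]
      refine (finsum_congr (fun n => ?_)).trans finsum_zero
      rw [Bl_nil, contract_one, mul_zero, sg_zero]
    rw [h1, Gl_nil]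
    simp only [List.length_nil, pow_zero, one_smul, Nat.cast_zero, sub_zero, Bl_nil]
    exact one_eq_sg
  | cons a as ih =>
    set d := as.length with hd
    set ctr : ℕ → ExtM₀ := fun n => contract (beta n) (Bl as) with hctr
    -- pieces
    have p2 : sg (1 - (a : ℤ)) (b 0) * SB as = 0 := by
      rw [SB, mul_finsum_L _ _ (SB_supp as _)]
      have : ∀ n : ℕ, sg (1 - (a : ℤ)) (b 0) * sg ((d : ℤ) - n) (b 0 * ctr n) = 0 := by
        intro n
        rw [sg_mul_sg, ← mul_assoc, b0_sq, zero_mul, sg_zero]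
      rw [finsum_congr this, finsum_zero]
    have p4 : sg 1 (b a) * SB as
        = ∑ᶠ n : ℕ, sg (((d : ℤ) + 1) - n) (b a * (b 0 * ctr n)) := by
      rw [SB, mul_finsum_L _ _ (SB_supp as _)]
      refine finsum_congr fun n => ?_
      have he : (1 : ℤ) + ((d : ℤ) - n) = ((d : ℤ) + 1) - n := by ring
      rw [sg_mul_sg, he]
    have key : G a * (sg (d : ℤ) (Bl as) - SB as)
        = -(sg ((d : ℤ) + 1) (b a * Bl as) - sg (((d : ℤ) + 1) - a) (b 0 * Bl as)
            + ∑ᶠ n : ℕ, sg (((d : ℤ) + 1) - n) (b 0 * (b a * ctr n))) := by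
      rw [G, sub_mul, mul_sub, mul_sub, p2, p4, sub_zero]
      have e1 : sg (1 - (a : ℤ)) (b 0) * sg (d : ℤ) (Bl as)
          = sg (((d : ℤ) + 1) - a) (b 0 * Bl as) := by
        rw [sg_mul_sg]; congr 1; ring
      have e3 : sg 1 (b a) * sg (d : ℤ) (Bl as) = sg ((d : ℤ) + 1) (b a * Bl as) := by
        rw [sg_mul_sg]; congr 1; ring
      have e4 : ∀ n : ℕ, sg (((d : ℤ) + 1) - n) (b a * (b 0 * ctr n))
          = -sg (((d : ℤ) + 1) - n) (b 0 * (b a * ctr n)) := by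
        intro n
        rw [← sg_neg]
        congr 1
        rw [← mul_assoc, b_mul_b_swap, neg_mul, mul_assoc]
      rw [e1, e3, finsum_congr e4, finsum_neg_L]
      abel
    have target : SB (a :: as)
        = sg (((d : ℤ) + 1) - a) (b 0 * Bl as)
          - ∑ᶠ n : ℕ, sg (((d : ℤ) + 1) - n) (b 0 * (b a * ctr n)) := by
      rw [SB]
      have hlen : ((List.length (a :: as) : ℕ) : ℤ) = (d : ℤ) + 1 := by
        simp [hd]
      have e5 : ∀ n : ℕ, sg (((List.length (a :: as) : ℕ) : ℤ) - n)
          (b 0 * contract (beta n) (Bl (a :: as)))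
          = (if a = n then sg (((d : ℤ) + 1) - n) (b 0 * Bl as) else 0)
            - sg (((d : ℤ) + 1) - n) (b 0 * (b a * ctr n)) := by
        intro n
        rw [hlen, Bl_cons, contract_b_mul, mul_sub, sg_sub]
        congr 1
        rcases eq_or_ne a n with h | h
        · rw [if_pos h, if_pos h]
        · rw [if_neg h, if_neg h, mul_zero, sg_zero]
      have hfin1 : (Function.support fun n : ℕ =>
          if a = n then sg (((d : ℤ) + 1) - n) (b 0 * Bl as) else 0).Finite := by
        refine Set.Finite.subset (Set.finite_singleton a) fun n hn => ?_
        simp only [Function.mem_support] at hn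
        by_contra h
        exact hn (if_neg (fun hh => (by simpa using h : ¬ n = a) hh.symm))
      have hfin2 : (Function.support fun n : ℕ =>
          sg (((d : ℤ) + 1) - n) (b 0 * (b a * ctr n))).Finite := by
        refine supp_fin_of_ctr as _ (fun n hn => ?_)
        show sg (((d : ℤ) + 1) - n) (b 0 * (b a * contract (beta n) (Bl as))) = 0
        rw [hn, mul_zero, mul_zero, sg_zero]
      rw [finsum_congr e5, finsum_sub_distrib hfin1 hfin2,
        finsum_eq_single _ a (fun n hn => if_neg (fun hh => hn hh.symm)), if_pos rfl]
    -- assemble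
    rw [Gl_cons, ih, mul_smul_comm, key, target]
    have hlen2 : ((List.length (a :: as) : ℕ) : ℤ) = (d : ℤ) + 1 := by simp [hd]
    have hlen3 : (List.length (a :: as) : ℕ) = d + 1 := by simp [hd]
    rw [hlen2, hlen3, Bl_cons, pow_succ]
    rw [mul_comm ((-1 : ℤ) ^ d) (-1), mul_smul, neg_one_zsmul, ← smul_neg]
    congr 1
    abel
  done

end SMT8

namespace SMT8

open Finset

section Main

variable {sm sbp sbm : ℕ → Module.End ℤ ExtM₀}

lemma ΦL_sub (p q : L) : ΦL (p - q) = ΦL p - ΦL q := map_sub ΦLh p q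

lemma Θ_sub (hsbp : IsSigmaBarPlus sbp) (p q : L) :
    Θ sbp (p - q) = Θ sbp p - Θ sbp q :=
  map_sub (⟨⟨Θ sbp, Θ_zero⟩, Θ_add hsbp⟩ : L →+ L) p q

/-- MAIN: the fundamental identity, in generating-series form. -/
lemma main (hsm : IsSigmaMinus sm) (hsbp : IsSigmaBarPlus sbp) (l : List ℕ) :
    Θ sbp (ΦL (ctrL (FL l))) = ((-1 : ℤ) ^ (l.length + 1)) •
      ∑ᶠ n : ℕ, sg ((l.length : ℤ) - 1 - n) (contract (beta n) (Bl l)) := by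
  induction l with
  | nil =>
    have h1 : ctrL (FL []) = 0 := by
      rw [FL_nil, one_eq_sg, ctrL_sg, contract_one, sg_zero]
    rw [h1, ΦL_zero, Θ_zero]
    have hz : (∑ᶠ n : ℕ, sg (((([] : List ℕ).length : ℕ) : ℤ) - 1 - (n : ℤ))
        (contract (beta n) (Bl []))) = (0 : L) := by
      refine (finsum_congr (fun n => ?_)).trans finsum_zero
      rw [Bl_nil, contract_one, sg_zero]
    rw [hz, smul_zero]
  | cons a l ih =>
    set d := l.length with hd
    set ctr : ℕ → ExtM₀ := fun n => contract (beta n) (Bl l) with hctr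
    have step1 : ctrL (FL (a :: l)) = sg (-(a : ℤ)) 1 * FL l - F a * ctrL (FL l) := by
      rw [FL_cons, ctrL_F_mul]
    rw [step1, ΦL_sub, Θ_sub hsbp, ΦL_mul, ΦL_mul, Θ_mul hsbp, Θ_mul hsbp,
      ΘΦ_sg_one hsbp, ΘΦ_F hsbp, ΘΦ_FL hsbp, ih, Gl_eq]
    -- abbreviations
    set A : L := ∑ᶠ n : ℕ, sg (((d : ℤ) - a) - n) (b 0 * ctr n) with hA
    set B : L := ∑ᶠ n : ℕ, sg ((d : ℤ) - n) (b a * ctr n) with hB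
    have t1 : sg (-(a : ℤ)) 1 * ((-1 : ℤ) ^ d • (sg (d : ℤ) (Bl l) - SB l))
        = (-1 : ℤ) ^ d • (sg ((d : ℤ) - a) (Bl l) - A) := by
      rw [mul_smul_comm, mul_sub]
      congr 2
      · rw [sg_mul_sg, one_mul]
        congr 1
        ring
      · rw [SB, mul_finsum_L _ _ (SB_supp l _), hA]
        refine finsum_congr fun n => ?_
        rw [sg_mul_sg, one_mul]
        congr 1
        ring
    have t2 : G a * ((-1 : ℤ) ^ (d + 1) • ∑ᶠ n : ℕ, sg ((d : ℤ) - 1 - n) (ctr n))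
        = (-1 : ℤ) ^ (d + 1) • (A - B) := by
      rw [mul_smul_comm]
      congr 1
      rw [G, sub_mul, mul_finsum_L _ _ (Sl_supp' l _), mul_finsum_L _ _ (Sl_supp' l _), hA, hB]
      congr 1
      · refine finsum_congr fun n => ?_
        rw [sg_mul_sg]
        congr 1
        ring
      · refine finsum_congr fun n => ?_
        rw [sg_mul_sg]
        congr 1
        ring
    rw [t1, t2]
    -- right-hand side
    have hlen3 : (a :: l).length = d + 1 := by simp [hd]
    rw [hlen3]
    have target : ∑ᶠ n : ℕ, sg (((d + 1 : ℕ) : ℤ) - 1 - n) (contract (beta n) (Bl (a :: l)))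
        = sg ((d : ℤ) - a) (Bl l) - B := by
      have e5 : ∀ n : ℕ, sg (((d + 1 : ℕ) : ℤ) - 1 - n) (contract (beta n) (Bl (a :: l)))
          = (if a = n then sg ((d : ℤ) - n) (Bl l) else 0) - sg ((d : ℤ) - n) (b a * ctr n) := by
        intro n
        have he : ((d + 1 : ℕ) : ℤ) - 1 - n = (d : ℤ) - n := by push_cast; ring
        rw [he, Bl_cons, contract_b_mul, sg_sub]
        congr 1
        rcases eq_or_ne a n with h | h
        · rw [if_pos h, if_pos h]
        · rw [if_neg h, if_neg h, sg_zero]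
      have hfin1 : (Function.support fun n : ℕ =>
          if a = n then sg ((d : ℤ) - n) (Bl l) else 0).Finite := by
        refine Set.Finite.subset (Set.finite_singleton a) fun n hn => ?_
        simp only [Function.mem_support] at hn
        by_contra h
        exact hn (if_neg (fun hh => (by simpa using h : ¬ n = a) hh.symm))
      have hfin2 : (Function.support fun n : ℕ =>
          sg ((d : ℤ) - n) (b a * ctr n)).Finite :=
        supp_fin_of_ctr l _ (fun n hn => by
          show sg ((d : ℤ) - n) (b a * contract (beta n) (Bl l)) = 0
          rw [hn, mul_zero, sg_zero])
      rw [finsum_congr e5, finsum_sub_distrib hfin1 hfin2,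
        finsum_eq_single _ a (fun n hn => if_neg (fun hh => hn hh.symm)), if_pos rfl, hB]
    rw [target]
    -- final sign juggling : (-1)^d • (X - A) - (-1)^(d+1) • (A - B) = (-1)^(d+2) • (X - B)
    have hpow2 : ((-1 : ℤ) ^ (d + 1 + 1)) = (-1 : ℤ) ^ d := by
      rw [pow_succ, pow_succ]
      ring
    rw [hpow2, pow_succ, mul_comm ((-1 : ℤ) ^ d) (-1), mul_smul, neg_one_zsmul,
      sub_neg_eq_add, ← smul_add]
    congr 1
    abel

end Main

end SMT8

namespace SMT8

open Finset

section Assembly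

variable (sm sbp sbm : ℕ → Module.End ℤ ExtM₀)

/-- the inner term `σ̄_{-(r-1)}(β₀ ⌟ σ₋ⱼ m)` -/
noncomputable def Yv (r : ℕ) (m : ExtM₀) (j : ℕ) : ExtM₀ :=
  ((-1 : ℤ) ^ (r - 1)) • sbm (r - 1) (contract (beta 0) (sm j m))

/-- the general term of the double series -/
noncomputable def Tt (r : ℕ) (k : ℤ) (m : ExtM₀) (i j : ℕ) : ExtM₀ :=
  if (i : ℤ) - (j : ℤ) = k + (r : ℤ) then sbp i (Yv sm sbm r m j) else 0

/-- the collapsed single series -/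
noncomputable def Uu (r : ℕ) (k : ℤ) (m : ExtM₀) (j : ℕ) : ExtM₀ :=
  if 0 ≤ k + (r : ℤ) + j then sbp ((k + (r : ℤ) + j).toNat) (Yv sm sbm r m j) else 0

variable {sm sbp sbm}

lemma Yv_zero_of {r : ℕ} {m : ExtM₀} {j : ℕ} (h : sm j m = 0) : Yv sm sbm r m j = 0 := by
  rw [Yv, h, contract_zero, map_zero, smul_zero]

lemma Yv_zero (r : ℕ) (j : ℕ) : Yv sm sbm r 0 j = 0 := Yv_zero_of (map_zero _)

lemma Yv_add (r : ℕ) (x y : ExtM₀) (j : ℕ) :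
    Yv sm sbm r (x + y) j = Yv sm sbm r x j + Yv sm sbm r y j := by
  rw [Yv, Yv, Yv, map_add, contract_add, map_add, smul_add]

lemma Yv_smul (r : ℕ) (t : ℤ) (x : ExtM₀) (j : ℕ) :
    Yv sm sbm r (t • x) j = t • Yv sm sbm r x j := by
  rw [Yv, Yv, map_smul, contract_smul, map_smul, smul_comm]

lemma Uu_zero_of {r : ℕ} {k : ℤ} {m : ExtM₀} {j : ℕ} (h : sm j m = 0) :
    Uu sm sbp sbm r k m j = 0 := by
  rw [Uu, Yv_zero_of h, map_zero]
  split <;> rfl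

lemma claim1 (hsm : IsSigmaMinus sm) (r : ℕ) (k : ℤ) (m : ExtM₀) :
    (∑ᶠ (i : ℕ) (j : ℕ), Tt sm sbp sbm r k m i j) = ∑ᶠ j : ℕ, Uu sm sbp sbm r k m j := by
  obtain ⟨NJ, hNJ⟩ := sm_fin hsm m
  have hT0 : ∀ i j, NJ ≤ j → Tt sm sbp sbm r k m i j = 0 := by
    intro i j h
    rw [Tt, Yv_zero_of (hNJ j h), map_zero]
    split <;> rfl
  have hU0 : ∀ j, NJ ≤ j → Uu sm sbp sbm r k m j = 0 := fun j h => Uu_zero_of (hNJ j h)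
  set NI := (k + (r : ℤ) + NJ).toNat with hNI
  have hinner : ∀ i : ℕ, (∑ᶠ j : ℕ, Tt sm sbp sbm r k m i j)
      = ∑ j ∈ Finset.range NJ, Tt sm sbp sbm r k m i j := by
    intro i
    refine finsum_eq_finset_sum_of_support_subset _ fun j hj => ?_
    simp only [Finset.coe_range, Set.mem_Iio]
    by_contra h
    push_neg at h
    exact hj (hT0 i j h)
  rw [finsum_congr hinner]
  have houter : (∑ᶠ i : ℕ, ∑ j ∈ Finset.range NJ, Tt sm sbp sbm r k m i j)
      = ∑ i ∈ Finset.range NI, ∑ j ∈ Finset.range NJ, Tt sm sbp sbm r k m i j := by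
    refine finsum_eq_finset_sum_of_support_subset _ fun i hi => ?_
    simp only [Finset.coe_range, Set.mem_Iio]
    by_contra h
    push_neg at h
    refine hi (Finset.sum_eq_zero fun j hj => ?_)
    rw [Finset.mem_range] at hj
    rw [Tt]
    refine if_neg fun heq => ?_
    omega
  rw [houter, Finset.sum_comm]
  have hcol : ∀ j ∈ Finset.range NJ, (∑ i ∈ Finset.range NI, Tt sm sbp sbm r k m i j)
      = Uu sm sbp sbm r k m j := by
    intro j hj
    rw [Finset.mem_range] at hj
    by_cases hnn : 0 ≤ k + (r : ℤ) + j
    · have h1 : ∀ i ∈ Finset.range NI, Tt sm sbp sbm r k m i j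
          = if i = (k + (r : ℤ) + j).toNat then sbp i (Yv sm sbm r m j) else 0 := by
        intro i _
        rw [Tt]
        exact if_congr (by omega) rfl rfl
      rw [Finset.sum_congr rfl h1,
        Finset.sum_ite_eq' (Finset.range NI) ((k + (r : ℤ) + j).toNat) _,
        if_pos (by rw [Finset.mem_range]; omega), Uu, if_pos hnn]
    · rw [Uu, if_neg hnn]
      exact Finset.sum_eq_zero fun i _ => if_neg (by omega)
  rw [Finset.sum_congr rfl hcol]
  exact (finsum_eq_finset_sum_of_support_subset _ fun j hj => by
    simp only [Finset.coe_range, Set.mem_Iio]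
    by_contra h
    push_neg at h
    exact hj (hU0 j h)).symm

lemma step2 (hsm : IsSigmaMinus sm) (hsbp : IsSigmaBarPlus sbp) (hsbm : IsSigmaBarMinus sbm)
    (r : ℕ) (hr : 1 ≤ r) (k : ℤ) :
    ∀ m ∈ Wd r, (∑ᶠ j : ℕ, Uu sm sbp sbm r k m j)
      = ((-1 : ℤ) ^ (r + 1)) •
          (if k + 1 ≤ 0 then contract (beta (-(k + 1)).toNat) m else 0) := by
  intro m hm
  induction hm using Submodule.span_induction with
  | mem y hy =>
    obtain ⟨l, hlen, rfl⟩ := hy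
    -- the inner term is `Φ` applied
    have hYv : ∀ j : ℕ, Yv sm sbm r (Bl l) j
        = Φ (contract (beta 0) (sm j (Bl l))) := by
      intro j
      have hmem : contract (beta 0) (sm j (Bl l)) ∈ Wd (r - 1) := by
        have h1 : sm j (Bl l) ∈ Wd r := by
          rw [← FL_coeff hsm, ← hlen]
          exact FL_coeff_mem l _
        have h2 : r = (r - 1) + 1 := by omega
        exact contract_Wd (beta 0) (h2 ▸ h1)
      rw [Yv]
      exact key_inner hsbm hmem
    set Q : L := ΦL (ctrL (FL l)) with hQdef
    have hQ : ∀ j : ℕ, Q (-(j : ℤ)) = Yv sm sbm r (Bl l) j := by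
      intro j
      rw [hQdef, ΦL_apply, ctrL_apply, FL_coeff hsm, hYv]
    have hQpos : ∀ c : ℤ, 0 < c → Q c = 0 := by
      intro c hc
      rw [hQdef, ΦL_apply, ctrL_apply, FL_coeff_pos hsm l c hc, contract_zero, map_zero]
    obtain ⟨NJ, hNJ⟩ := sm_fin hsm (Bl l)
    have hQneg : ∀ j : ℕ, NJ ≤ j → Q (-(j : ℤ)) = 0 := by
      intro j h
      rw [hQ, Yv_zero_of (hNJ j h)]
    -- left side as a finite sum
    have hL : (∑ᶠ j : ℕ, Uu sm sbp sbm r k (Bl l) j)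
        = ∑ j ∈ Finset.range NJ, Uu sm sbp sbm r k (Bl l) j := by
      refine finsum_eq_finset_sum_of_support_subset _ fun j hj => ?_
      simp only [Finset.coe_range, Set.mem_Iio]
      by_contra h
      push_neg at h
      exact hj (Uu_zero_of (hNJ j h))
    -- Θ Q evaluated at k + r
    have hsupp : Q.coeff.support ⊆ (Finset.range NJ).image (fun j : ℕ => -(j : ℤ)) := by
      intro c hc
      rw [Finsupp.mem_support_iff] at hc
      rcases le_or_gt c 0 with h | h
      · refine Finset.mem_image.mpr ⟨(-c).toNat, ?_, by omega⟩
        rw [Finset.mem_range]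
        by_contra hh
        push_neg at hh
        refine hc ?_
        have : c = -(((-c).toNat : ℕ) : ℤ) := by omega
        rw [this]
        exact hQneg _ hh
      · exact absurd (hQpos c h) hc
    have hΘsum : Θ sbp Q = ∑ c ∈ (Finset.range NJ).image (fun j : ℕ => -(j : ℤ)),
        ser sbp 1 (Q c) * sg c 1 :=
      Finsupp.sum_of_support_subset Q.coeff hsupp _ (fun c _ => by rw [ser_zero, zero_mul])
    have hval : Θ sbp Q (k + (r : ℤ)) = ∑ j ∈ Finset.range NJ, Uu sm sbp sbm r k (Bl l) j := by
      rw [hΘsum, AddMonoidAlgebra.coeff_sum, Finset.sum_apply', Finset.sum_image (fun x _ y _ h => by omega)]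
      refine Finset.sum_congr rfl fun j hj => ?_
      rw [mul_sg_apply, mul_one, ser_apply_pos (sbp_fin hsbp), sub_neg_eq_add, hQ j, Uu]
    -- the main identity
    have hmain := main hsm hsbp l
    rw [hlen] at hmain
    have hval2 : Θ sbp Q (k + (r : ℤ)) = ((-1 : ℤ) ^ (r + 1)) •
        (if k + 1 ≤ 0 then contract (beta (-(k + 1)).toNat) (Bl l) else 0) := by
      rw [← hQdef] at hmain
      rw [hmain, AddMonoidAlgebra.coeff_smul_apply]
      congr 1
      have happ : ((∑ᶠ n : ℕ, sg ((r : ℤ) - 1 - n) (contract (beta n) (Bl l))) (k + (r : ℤ)))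
          = ∑ᶠ n : ℕ, (sg ((r : ℤ) - 1 - (n : ℤ)) (contract (beta n) (Bl l))) (k + (r : ℤ)) :=
        ((Finsupp.applyAddHom (k + (r : ℤ))).comp
            (AddMonoidAlgebra.coeffAddEquiv : L ≃+ (ℤ →₀ ExtM₀)).toAddMonoidHom).map_finsum
          (Sl_supp' l (fun n => (r : ℤ) - 1 - n))
      rw [happ]
      by_cases hk : k + 1 ≤ 0
      · rw [if_pos hk]
        rw [finsum_eq_single _ ((-(k + 1)).toNat)
          (fun n hn => by rw [sg_apply, if_neg (by omega)])]
        rw [sg_apply, if_pos (by omega)]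
      · rw [if_neg hk]
        refine (finsum_congr fun n => ?_).trans finsum_zero
        rw [sg_apply, if_neg (by omega)]
    rw [hL, ← hval, hval2]
  | zero =>
    have : ∀ j : ℕ, Uu sm sbp sbm r k 0 j = 0 := fun j => Uu_zero_of (map_zero _)
    rw [finsum_congr this, finsum_zero]
    rw [if_congr Iff.rfl (contract_zero _) rfl]
    split <;> simp
  | add x y hx hy ihx ihy =>
    obtain ⟨Nx, hNx⟩ := sm_fin hsm x
    obtain ⟨Ny, hNy⟩ := sm_fin hsm y
    have hUadd : ∀ j : ℕ, Uu sm sbp sbm r k (x + y) j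
        = Uu sm sbp sbm r k x j + Uu sm sbp sbm r k y j := by
      intro j
      rw [Uu, Uu, Uu, Yv_add, map_add]
      split
      · rfl
      · rw [add_zero]
    have hfx : (Function.support fun j => Uu sm sbp sbm r k x j).Finite := by
      refine Set.Finite.subset (Finset.range Nx).finite_toSet fun j hj => ?_
      simp only [Finset.coe_range, Set.mem_Iio]
      by_contra h
      push_neg at h
      exact hj (Uu_zero_of (hNx j h))
    have hfy : (Function.support fun j => Uu sm sbp sbm r k y j).Finite := by
      refine Set.Finite.subset (Finset.range Ny).finite_toSet fun j hj => ?_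
      simp only [Finset.coe_range, Set.mem_Iio]
      by_contra h
      push_neg at h
      exact hj (Uu_zero_of (hNy j h))
    rw [finsum_congr hUadd, finsum_add_distrib hfx hfy, ihx, ihy,
      if_congr Iff.rfl (contract_add _ x y) rfl]
    split
    · rw [smul_add]
    · simp
  | smul t x hx ihx =>
    obtain ⟨Nx, hNx⟩ := sm_fin hsm x
    have hUsmul : ∀ j : ℕ, Uu sm sbp sbm r k (t • x) j = t • Uu sm sbp sbm r k x j := by
      intro j
      rw [Uu, Uu, Yv_smul, map_smul]
      split
      · rfl
      · rw [smul_zero]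
    have hfx : (Function.support fun j => Uu sm sbp sbm r k x j).Finite := by
      refine Set.Finite.subset (Finset.range Nx).finite_toSet fun j hj => ?_
      simp only [Finset.coe_range, Set.mem_Iio]
      by_contra h
      push_neg at h
      exact hj (Uu_zero_of (hNx j h))
    rw [finsum_congr hUsmul, ← smul_finsum' t hfx, ihx,
      if_congr Iff.rfl (contract_smul _ t x) rfl]
    split
    · rw [smul_comm]
    · rw [smul_zero, smul_zero]

end Assembly

end SMT8

/--
for every `r ≥ 1` and every `m ∈ ⋀^r M₀`, the identity
`(z⁻¹ σ₋(z)ᵀ β₀) ⌟ m = (-1)^{r-1} z^{-r} σ̄₊(z) σ̄_{-r+1} (β₀ ⌟ σ₋(z) m)` holds in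
`⋀^{r-1} M₀`, coefficient by coefficient (coefficient of `z^k`, `k ∈ ℤ`).  Since
`σ₋(z)ᵀ β₀ = Σ_j β_j z^{-j}`, the left-hand side is `Σ_j (β_j ⌟ m) z^{-j-1}`; on the right,
the coefficient of `z^k` of `σ̄₊(z) y(z)` with `y(z) = Σ_j σ̄_{-r+1}(β₀ ⌟ σ₋ⱼ m) z^{-j}` is
the finite sum `Σ_{i-j=k+r} sbpᵢ (σ̄_{-(r-1)} (β₀ ⌟ smⱼ m))`, with
`σ̄_{-(r-1)} = (-1)^{r-1} • sbm (r-1)`.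
-/
theorem sigmaMinus_transpose_contraction
    (r : ℕ) (hr : 1 ≤ r) (m : ExtM₀) (hm : m ∈ ⋀[ℤ]^r M₀)
    (sm : ℕ → Module.End ℤ ExtM₀) (hsm : IsSigmaMinus sm)
    (sbp : ℕ → Module.End ℤ ExtM₀) (hsbp : IsSigmaBarPlus sbp)
    (sbm : ℕ → Module.End ℤ ExtM₀) (hsbm : IsSigmaBarMinus sbm) :
    ∀ k : ℤ,
      (if k + 1 ≤ 0 then contract (beta (-(k + 1)).toNat) m else 0) =
        ((-1 : ℤ) ^ (r - 1)) •
          ∑ᶠ (i : ℕ) (j : ℕ),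
            (if (i : ℤ) - (j : ℤ) = k + (r : ℤ) then
              sbp i (((-1 : ℤ) ^ (r - 1)) • sbm (r - 1) (contract (beta 0) (sm j m)))
            else 0) := by
  
  intro k
  have hmW : m ∈ SMT8.Wd r := SMT8.exterior_le_Wd hm
  have h2 := SMT8.step2 hsm hsbp hsbm r hr k m hmW
  have h1 := SMT8.claim1 (sbp := sbp) (sbm := sbm) hsm r k m
  have hconv : (∑ᶠ (i : ℕ) (j : ℕ),
      (if (i : ℤ) - (j : ℤ) = k + (r : ℤ) then
        sbp i (((-1 : ℤ) ^ (r - 1)) • sbm (r - 1) (contract (beta 0) (sm j m)))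
      else 0)) = ∑ᶠ (i : ℕ) (j : ℕ), SMT8.Tt sm sbp sbm r k m i j := rfl
  rw [hconv, h1, h2, smul_smul, ← pow_add,
    Even.neg_one_pow (⟨r, by omega⟩ : Even ((r - 1) + (r + 1))), one_smul]
end

section
/- For every r ≥ 1 and every n ≥ 0, the following equalities hold in B_r[z^{−1}]: σ₋(z)h_n = Σ_{j=0}^{n} h_{n−j} z^{−j} and σ̄₋(z)h_n = h_n − h_{n−1} z^{−1} (with h_{−1} = 0). In particular these expressions are independent of r. -/
open ExteriorAlgebra

/-- `E_r(z) = 1 - e₁z + ⋯ + (-1)^r e_r z^r ∈ B_r[[z]]`, where `B_r = ℤ[e₁,…,e_r]` is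
`MvPolynomial (Fin r) ℤ` (the variable `X i` is `e_{i+1}`). -/
noncomputable def Epow (r : ℕ) : PowerSeries (MvPolynomial (Fin r) ℤ) :=
  1 + ∑ i : Fin r,
    PowerSeries.monomial (R := MvPolynomial (Fin r) ℤ) (i.1 + 1)
      ((-1 : MvPolynomial (Fin r) ℤ) ^ (i.1 + 1) * MvPolynomial.X i)

/-- The coefficient of `z^k` in `E_r(z)`. -/
noncomputable def Ecoeff (r k : ℕ) : MvPolynomial (Fin r) ℤ :=
  PowerSeries.coeff k (Epow r)

/-- The complete-homogeneous elements `h_n ∈ B_r` (for `n : ℤ`, with `h_n = 0` for `n < 0`),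
defined by `Σ_{n≥0} h_n z^n = 1/E_r(z)`. -/
noncomputable def hp (r : ℕ) (n : ℤ) : MvPolynomial (Fin r) ℤ :=
  if 0 ≤ n then PowerSeries.coeff n.toNat ((Epow r).invOfUnit 1) else 0

/-- The Schur determinant `Δ_λ(H_s) = det(h_{λ_j - j + i})_{1≤i,j≤r}` computed with the `h`'s
of `B_s`, for a partition `λ` with (at most) `r` parts, encoded as `lam : Fin r → ℕ`. -/
noncomputable def schurDet (s r : ℕ) (lam : Fin r → ℕ) : MvPolynomial (Fin s) ℤ :=
  Matrix.det (fun i j : Fin r => hp s ((lam j : ℤ) - (j : ℤ) + (i : ℤ)))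

/-- `σ₋(z) h_n = Σ_{j=0}^{n} h_{n-j} z^{-j}`, as a polynomial in the variable `X = z⁻¹` with
coefficients in `B_s` (and `σ₋(z)h_n = 0` for `n < 0`, `σ₋(z)h_0 = 1`). -/
noncomputable def smH (s : ℕ) (n : ℤ) : Polynomial (MvPolynomial (Fin s) ℤ) :=
  if 0 ≤ n then
    ∑ j ∈ Finset.range (n.toNat + 1), Polynomial.C (hp s (n - j)) * Polynomial.X ^ j
  else 0

/-- `σ̄₋(z) h_n = h_n - h_{n-1} z⁻¹`, as a polynomial in the variable `X = z⁻¹` with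
coefficients in `B_s`. -/
noncomputable def sbmH (s : ℕ) (n : ℤ) : Polynomial (MvPolynomial (Fin s) ℤ) :=
  Polynomial.C (hp s n) - Polynomial.C (hp s (n - 1)) * Polynomial.X


namespace SigmaMinusAux

noncomputable def Pm (m : ℕ) : ExtM₀ := (List.ofFn fun i : Fin m => b i).prod

lemma b_sq (i : ℕ) : b i * b i = 0 := ExteriorAlgebra.ι_sq_zero _

lemma b_swap (i j : ℕ) : b i * b j = -(b j * b i) :=
  eq_neg_of_add_eq_zero_left (ExteriorAlgebra.ι_add_mul_swap _ _)

lemma Pm_succ (m : ℕ) : Pm (m + 1) = Pm m * b m := by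
  unfold Pm
  rw [List.ofFn_succ', List.prod_concat]
  simp

lemma Pm_mul_b : ∀ m j, j < m → Pm m * b j = 0 := by
  intro m
  induction m with
  | zero => intro j h; omega
  | succ m ih =>
    intro j h
    rw [Pm_succ]
    rcases Nat.lt_succ_iff_lt_or_eq.mp h with h' | rfl
    · rw [mul_assoc, b_swap, mul_neg, ← mul_assoc, ih j h', zero_mul, neg_zero]
    · rw [mul_assoc, b_sq, mul_zero]

variable {D : ℕ → Module.End ℤ ExtM₀}

lemma D0_mul (hD : IsHSFamily D) (x y : ExtM₀) : D 0 (x * y) = D 0 x * D 0 y := by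
  rw [hD.1, Finset.Nat.antidiagonal_zero, Finset.sum_singleton]

lemma D0_Pm (hD : IsHSFamily D) (hb : ∀ j, D 0 (b j) = b j) (m : ℕ) :
    D 0 (Pm m) = Pm m := by
  induction m with
  | zero => simpa [Pm] using hD.2 0
  | succ m ih => rw [Pm_succ, D0_mul hD, ih, hb]

lemma Dk_Pm (hD : IsHSFamily D) (hb : ∀ j, D 0 (b j) = b j)
    (hkill : ∀ k j, 1 ≤ k → ∃ c : ℤ, D k (b j) = c • (if k ≤ j then b (j - k) else 0)) :
    ∀ m k, 1 ≤ k → D k (Pm m) = 0 := by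
  intro m
  induction m with
  | zero =>
    intro k hk
    have h1 := hD.2 k
    simp only [Pm, List.ofFn_zero, List.prod_nil]
    rw [h1, if_neg (by omega)]
  | succ m ih =>
    intro k hk
    rw [Pm_succ, hD.1]
    apply Finset.sum_eq_zero
    intro p hp
    rw [Finset.HasAntidiagonal.mem_antidiagonal] at hp
    rcases Nat.eq_zero_or_pos p.1 with h1 | h1
    · obtain ⟨c, hc⟩ := hkill p.2 m (by omega)
      rw [h1, D0_Pm hD hb, hc, mul_smul_comm]
      by_cases hkm : p.2 ≤ m
      · rw [if_pos hkm, Pm_mul_b m (m - p.2) (by omega), smul_zero]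
      · rw [if_neg hkm, mul_zero, smul_zero]
    · rw [ih p.1 h1, zero_mul]

lemma D_Pm_mul (hD : IsHSFamily D) (hb : ∀ j, D 0 (b j) = b j)
    (hkill : ∀ k j, 1 ≤ k → ∃ c : ℤ, D k (b j) = c • (if k ≤ j then b (j - k) else 0))
    (m k : ℕ) (y : ExtM₀) :
    D k (Pm m * y) = Pm m * D k y := by
  rw [hD.1]
  rw [Finset.sum_eq_single_of_mem (0, k) (Finset.HasAntidiagonal.mem_antidiagonal.mpr (zero_add k))]
  · rw [D0_Pm hD hb]
  · intro p hp hne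
    rw [Finset.HasAntidiagonal.mem_antidiagonal] at hp
    rcases Nat.eq_zero_or_pos p.1 with h1 | h1
    · exfalso
      apply hne
      obtain ⟨a, c⟩ := p
      simp only at h1 hp
      subst h1
      simp_all
    · rw [Dk_Pm hD hb hkill m p.1 h1, zero_mul]

/-- The partition `(n, 0, …, 0)`. -/
def lamF (r n : ℕ) : Fin r → ℕ := fun j => if (j : ℕ) = 0 then n else 0

lemma lamF_antitone (m n : ℕ) : Antitone (lamF (m + 1) n) := by
  intro a c hac
  unfold lamF
  by_cases h : (c : ℕ) = 0
  · have ha : (a : ℕ) = 0 := by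
      have := Fin.le_def.mp hac
      omega
    simp [h, ha]
  · rw [if_neg h]
    exact Nat.zero_le _

lemma bwedge_lamF (m n : ℕ) : bwedge (m + 1) (lamF (m + 1) n) = Pm m * b (m + n) := by
  unfold bwedge Pm
  rw [List.ofFn_succ', List.prod_concat]
  congr 1
  · have hfun : ∀ i : Fin m,
        b ((Fin.castSucc i : Fin (m + 1)).1 + lamF (m + 1) n (Fin.castSucc i).rev) = b i.1 := by
      intro i
      have h1 : (Fin.castSucc i).rev = (i.rev).succ := Fin.rev_castSucc i
      simp [lamF, h1, Fin.val_succ]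
    simp only [hfun]
  · simp [lamF, Fin.rev_last, Fin.val_last]

lemma hp_zero (r : ℕ) : hp r 0 = 1 := by
  rw [hp, if_pos le_rfl]
  have h := PowerSeries.constantCoeff_invOfUnit (Epow r) 1
  simpa using h

lemma hp_neg {r : ℕ} {n : ℤ} (h : n < 0) : hp r n = 0 := if_neg (not_le.mpr h)

lemma det_aux (m n : ℕ)
    (A : Matrix (Fin (m + 1)) (Fin (m + 1)) (MvPolynomial (Fin (m + 1)) ℤ))
    (hA : ∀ i j, A i j = hp (m + 1) ((lamF (m + 1) n j : ℤ) - ((j : ℕ) : ℤ) + ((i : ℕ) : ℤ))) :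
    A.det = hp (m + 1) (n : ℤ) := by
  rw [Matrix.det_succ_row_zero]
  rw [Finset.sum_eq_single_of_mem 0 (Finset.mem_univ 0)]
  · have hminor : (A.submatrix Fin.succ (Fin.succAbove 0)).det = 1 := by
      have htri : (A.submatrix Fin.succ (Fin.succAbove 0)).BlockTriangular
          OrderDual.toDual := by
        intro i j hij
        have hij' : (i : ℕ) < (j : ℕ) := hij
        simp only [Matrix.submatrix_apply, Fin.succAbove_zero]
        rw [hA]
        have hz : lamF (m + 1) n (Fin.succ j) = 0 := by
          simp [lamF, Fin.val_succ]
        rw [hz]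
        apply hp_neg
        simp only [Fin.val_succ]
        push_cast
        omega
      rw [Matrix.det_of_lowerTriangular _ htri]
      apply Finset.prod_eq_one
      intro i _
      simp only [Matrix.submatrix_apply, Fin.succAbove_zero]
      rw [hA]
      have hz : lamF (m + 1) n (Fin.succ i) = 0 := by
        simp [lamF, Fin.val_succ]
      rw [hz, show ((0 : ℕ) : ℤ) - ((i.succ : ℕ) : ℤ) + ((i.succ : ℕ) : ℤ) = (0 : ℤ) by ring]
      exact hp_zero _
    rw [hminor, hA]
    have h00 : lamF (m + 1) n 0 = n := by simp [lamF]
    rw [h00]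
    simp
  · intro j _ hj
    rw [hA]
    have h1 : (j : ℕ) ≠ 0 := fun h => hj (Fin.ext h)
    have hz : lamF (m + 1) n j = 0 := by simp [lamF, h1]
    rw [hz]
    simp only [Fin.val_zero, Nat.cast_zero]
    rw [hp_neg (by omega)]
    ring

lemma schur_lamF (m n : ℕ) :
    schurDet (m + 1) (m + 1) (lamF (m + 1) n) = hp (m + 1) (n : ℤ) := by
  unfold schurDet
  exact det_aux m n _ (fun i j => rfl)

end SigmaMinusAux

open SigmaMinusAux in
/--
for every `r ≥ 1` and every `n ≥ 0`, the equalities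
`σ₋(z)h_n = Σ_{j=0}^n h_{n-j} z^{-j}` and `σ̄₋(z)h_n = h_n - h_{n-1}z^{-1}` hold in
`B_r[z^{-1}]` (independently of `r`).  Here the action of `σ₋(z)`, `σ̄₋(z)` on `B_r` is
transported along the group isomorphism `φ_r : B_r → ⋀^r M₀`, `Δ_λ(H_r) ↦ [b]^r_λ`, so the
statement is expressed after applying `φ_r`: coefficientwise, for all `j`,
`σ₋ⱼ(φ_r h_n) = φ_r(h_{n-j})`, and `σ̄₋(z)(φ_r h_n)` has coefficients `φ_r h_n`, `-φ_r h_{n-1}`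
and `0` in degrees `0`, `-1`, `≤ -2` respectively.
-/

theorem sigmaMinus_on_h
    (r : ℕ) (hr : 1 ≤ r) (n : ℕ)
    (sm : ℕ → Module.End ℤ ExtM₀) (hsm : IsSigmaMinus sm)
    (sbm : ℕ → Module.End ℤ ExtM₀) (hsbm : IsSigmaBarMinus sbm)
    (φ : MvPolynomial (Fin r) ℤ →ₗ[ℤ] ExtM₀)
    (hφ : ∀ lam : Fin r → ℕ, Antitone lam → φ (schurDet r r lam) = bwedge r lam) :
    (∀ j : ℕ, sm j (φ (hp r n)) = φ (hp r ((n : ℤ) - (j : ℤ)))) ∧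
    sbm 0 (φ (hp r n)) = φ (hp r n) ∧
    sbm 1 (φ (hp r n)) = -φ (hp r ((n : ℤ) - 1)) ∧
    (∀ j : ℕ, 2 ≤ j → sbm j (φ (hp r n)) = 0) := by
  obtain ⟨m, rfl⟩ : ∃ m, r = m + 1 := ⟨r - 1, by omega⟩
  have key : ∀ k : ℕ, φ (hp (m + 1) (k : ℤ)) = Pm m * b (m + k) := by
    intro k
    rw [← schur_lamF m k, hφ _ (lamF_antitone m k), bwedge_lamF]
  have hbsm0 : ∀ j, sm 0 (b j) = b j := by
    intro j
    simpa using hsm.2 0 j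
  have hksm : ∀ k j, 1 ≤ k → ∃ c : ℤ, sm k (b j) = c • (if k ≤ j then b (j - k) else 0) :=
    fun k j _ => ⟨1, by rw [hsm.2 k j, one_smul]⟩
  have hbsbm0 : ∀ j, sbm 0 (b j) = b j := hsbm.2.1
  have hksbm : ∀ k j, 1 ≤ k → ∃ c : ℤ, sbm k (b j) = c • (if k ≤ j then b (j - k) else 0) := by
    intro k j hk
    rcases eq_or_lt_of_le hk with h1 | h2
    · exact ⟨-1, by rw [← h1, hsbm.2.2.1 j, neg_smul, one_smul]⟩
    · exact ⟨0, by rw [hsbm.2.2.2 k j (by omega), zero_smul]⟩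
  refine ⟨?_, ?_, ?_, ?_⟩
  · intro j
    rw [key n, D_Pm_mul hsm.1 hbsm0 hksm, hsm.2 j (m + n)]
    by_cases hjn : j ≤ n
    · have hcast : (n : ℤ) - j = ((n - j : ℕ) : ℤ) := by omega
      rw [hcast, key (n - j), if_pos (by omega)]
      congr 2
      omega
    · rw [hp_neg (by omega), map_zero]
      by_cases hj2 : j ≤ m + n
      · rw [if_pos hj2, Pm_mul_b m (m + n - j) (by omega)]
      · rw [if_neg hj2, mul_zero]
  · rw [key n, D0_mul hsbm.1, D0_Pm hsbm.1 hbsbm0, hbsbm0]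
  · rw [key n, D_Pm_mul hsbm.1 hbsbm0 hksbm, hsbm.2.2.1, mul_neg]
    by_cases hn : 1 ≤ n
    · have hcast : (n : ℤ) - 1 = ((n - 1 : ℕ) : ℤ) := by omega
      rw [hcast, key (n - 1), if_pos (by omega)]
      congr 3
      omega
    · have hn0 : n = 0 := by omega
      subst hn0
      rw [hp_neg (by omega), map_zero, neg_zero]
      by_cases hm : 1 ≤ m
      · rw [if_pos (by omega), Pm_mul_b m (m + 0 - 1) (by omega), neg_zero]
      · have hm0 : m = 0 := by omega
        subst hm0
        rw [if_neg (by omega), mul_zero, neg_zero]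
  · intro j hj
    rw [key n, D_Pm_mul hsbm.1 hbsbm0 hksbm, hsbm.2.2.2 j _ hj, mul_zero]
end
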